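/- arXiv:2206.01776 — 8 statements merged into one kernel-verified Lean document; each statement's English description precedes it below -/
import Mathlib

section
/- For all n ≥ 1, the sum ∑_{1 ≤ i ≤ n} X_{2i} equals (3·X_{2n} - X_{2n+1} + 2·X_{2n+2} - 6)/5. -/
def X : ℕ → ℕ
  | 0 => 0
  | 1 => 1
  | 2 => 2
  | 3 => 4
  | 4 => 7
  | (n+5) => X (n+4) + X (n+3) + X (n+1)

lemma Xaux : ∀ m : ℕ, X (m+4) + X (m+2) = 2 * X (m+3) + X (m+1) := by
  intro m
  induction m with
  | zero => simp [X]
  | succ k ih =>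
    have h5 : X (k+5) = X (k+4) + X (k+3) + X (k+1) := rfl
    simp only [show k+1+4=k+5 by omega, show k+1+3=k+4 by omega,
      show k+1+2=k+3 by omega, show k+1+1=k+2 by omega]
    omega

lemma Xkey : ∀ m : ℕ, 5 * (∑ i ∈ Finset.Icc 1 (m+1), X (2*i)) + X (2*m+3) + 6
    = 3 * X (2*m+2) + 2 * X (2*m+4) := by
  intro m
  induction m with
  | zero => simp [X]
  | succ k ih =>
    rw [show k + 1 + 1 = (k+1) + 1 from rfl,
      Finset.sum_Icc_succ_top (by omega : 1 ≤ (k+1)+1)]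
    have haux := Xaux (2*k+1)
    have h6 : X (2*k+6) = X (2*k+5) + X (2*k+4) + X (2*k+2) := rfl
    have e1 : 2*(k+1)+2 = 2*k+4 := by ring
    have e2 : 2*(k+1)+3 = 2*k+5 := by ring
    have e3 : 2*(k+1)+4 = 2*k+6 := by ring
    have e4 : 2*((k+1)+1) = 2*k+4 := by ring
    rw [e4, e3, e2, e1]
    simp only [show 2*k+1+4=2*k+5 by omega, show 2*k+1+3=2*k+4 by omega, show 2*k+1+2=2*k+3 by omega,
      show 2*k+1+1=2*k+2 by omega] at haux
    omega

theorem stmt5 : ∀ n : ℕ, 1 ≤ n →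
    (∑ i ∈ Finset.Icc 1 n, (X (2*i) : ℤ)) =
      (3 * X (2*n) - X (2*n+1) + 2 * X (2*n+2) - 6) / 5 ∧
    (5 : ℤ) ∣ (3 * X (2*n) - X (2*n+1) + 2 * X (2*n+2) - 6) := by
  intro n hn
  obtain ⟨m, rfl⟩ : ∃ m, n = m + 1 := ⟨n - 1, by omega⟩
  have hkey := Xkey m
  have hcast : (∑ i ∈ Finset.Icc 1 (m+1), (X (2*i) : ℤ))
      = ((∑ i ∈ Finset.Icc 1 (m+1), X (2*i) : ℕ) : ℤ) := by
    push_cast; rfl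
  have e1 : 2*(m+1) = 2*m+2 := by ring
  have e2 : 2*(m+1)+1 = 2*m+3 := by ring
  have e3 : 2*(m+1)+2 = 2*m+4 := by ring
  rw [e3, e2, e1, hcast]
  set S : ℕ := ∑ i ∈ Finset.Icc 1 (m+1), X (2*i) with hS
  have hnum : (3 * X (2*m+2) - X (2*m+3) + 2 * X (2*m+4) - 6 : ℤ) = 5 * (S : ℤ) := by
    omega
  rw [hnum]
  exact ⟨(Int.mul_ediv_cancel_left _ (by norm_num)).symm, ⟨S, rfl⟩⟩
end

section
/- With X_n and β₁ as above and α₁ = (β₁² + 6β₁ + 3)/23, there holds |X_n - α₁β₁^n| < (β₁ - 1)^n for all n ≥ 1. -/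
noncomputable def E (b : ℝ) (n : ℕ) : ℝ := (X n : ℝ) - ((b^2 + 6*b + 3) / 23) * b^n

noncomputable def V (b : ℝ) (n : ℕ) : ℝ :=
  (E b (n+1))^2 - (2-b)*(E b (n+1))*(E b n) + (b-1)^2*(E b n)^2

lemma Xrec (n : ℕ) : X (n+4) + X (n+2) = 2 * X (n+3) + X (n+1) := by
  induction n with
  | zero => rfl
  | succ n ih =>
    have h : X (n+5) = X (n+4) + X (n+3) + X (n+1) := rfl
    show X (n+5) + X (n+3) = 2 * X (n+4) + X (n+2)
    omega

lemma Erec (b : ℝ) (hroot : b^3 - 2*b^2 + b - 1 = 0) (n : ℕ) :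
    E b (n+3) = (2-b) * E b (n+2) - (b-1)^2 * E b (n+1) := by
  have hβ : b * (b-1)^2 = 1 := by linear_combination hroot
  induction n with
  | zero =>
    have h1 : (X 1 : ℝ) = 1 := by norm_num [X]
    have h2 : (X 2 : ℝ) = 2 := by norm_num [X]
    have h3 : (X 3 : ℝ) = 4 := by norm_num [X]
    simp only [E, h1, h2, h3]
    linear_combination (-1 - 20/23*b - 3/23*b^2) * hroot
  | succ n ih =>
    have hxR : ((X (n+4) : ℝ)) + (X (n+2) : ℝ) = 2 * (X (n+3) : ℝ) + (X (n+1) : ℝ) := by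
      exact_mod_cast Xrec n
    have hthird : E b (n+4) = 2 * E b (n+3) - E b (n+2) + E b (n+1) := by
      simp only [E]
      linear_combination hxR - ((b^2+6*b+3)/23) * b^(n+1) * hroot
    show E b (n+4) = (2-b) * E b (n+3) - (b-1)^2 * E b (n+2)
    linear_combination hthird + b * ih - E b (n+1) * hβ

lemma Vpow (b : ℝ) (hroot : b^3 - 2*b^2 + b - 1 = 0) (n : ℕ) :
    V b (n+1) = ((b-1)^2)^n * V b 1 := by
  induction n with
  | zero => simp
  | succ n ih =>
    have hVrec : V b (n+2) = (b-1)^2 * V b (n+1) := by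
      simp only [V]
      linear_combination (E b (n+3) - (b-1)^2 * E b (n+1)) * Erec b hroot n
    rw [hVrec, ih]; ring

theorem stmt7 (β₁ : ℝ)
    (hroot : β₁^3 - 2*β₁^2 + β₁ - 1 = 0)
    (huniq : ∀ x : ℝ, x^3 - 2*x^2 + x - 1 = 0 → x = β₁) :
    ∀ n : ℕ, 1 ≤ n →
      |(X n : ℝ) - ((β₁^2 + 6*β₁ + 3) / 23) * β₁^n| < (β₁ - 1)^n := by
  -- bounds on β₁ via IVT
  have hcont : ContinuousOn (fun x : ℝ => x^3 - 2*x^2 + x - 1) (Set.Icc 1.75 1.76) :=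
    (by fun_prop : Continuous fun x : ℝ => x^3 - 2*x^2 + x - 1).continuousOn
  have hiv := intermediate_value_Icc (by norm_num : (1.75:ℝ) ≤ 1.76) hcont
  have h0 : (0:ℝ) ∈ Set.Icc ((1.75:ℝ)^3 - 2*1.75^2 + 1.75 - 1)
      ((1.76:ℝ)^3 - 2*1.76^2 + 1.76 - 1) := by
    constructor <;> norm_num
  obtain ⟨x, hx, hfx⟩ := hiv h0
  have hxβ : x = β₁ := huniq x hfx
  rw [hxβ] at hx
  have hlb : (1.75:ℝ) ≤ β₁ := hx.1
  have hub : β₁ ≤ (1.76:ℝ) := hx.2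
  have hβpos : (0:ℝ) < β₁ - 1 := by linarith
  have hd : 0 < (β₁-1)^2 - (2-β₁)^2/4 := by nlinarith
  have h1 : (X 1 : ℝ) = 1 := by norm_num [X]
  have h2 : (X 2 : ℝ) = 2 := by norm_num [X]
  have hkey : V β₁ 1 < (β₁-1)^2 * ((β₁-1)^2 - (2-β₁)^2/4) := by
    have hq : 2116 * ((β₁-1)^2 * ((β₁-1)^2 - (2-β₁)^2/4) - V β₁ 1)
        = 1012*β₁^2 - 805*β₁ - 1196 := by
      simp only [V, E, h1, h2]
      linear_combination (920 + 2783*β₁ - 608*β₁^2 - 608*β₁^3 - 152*β₁^4 - 12*β₁^5) * hroot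
    nlinarith [sq_nonneg (β₁ - 1.75)]
  intro n hn
  obtain ⟨m, rfl⟩ : ∃ m, n = m + 1 := ⟨n - 1, by omega⟩
  have hVb : (E β₁ (m+1))^2 * ((β₁-1)^2 - (2-β₁)^2/4) ≤ V β₁ (m+1) := by
    have hsq : V β₁ (m+1) - (E β₁ (m+1))^2 * ((β₁-1)^2 - (2-β₁)^2/4)
        = (E β₁ (m+2) - (2-β₁)/2 * E β₁ (m+1))^2 := by
      simp only [V]; ring
    nlinarith [sq_nonneg (E β₁ (m+2) - (2-β₁)/2 * E β₁ (m+1))]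
  have hppos : (0:ℝ) < ((β₁-1)^2)^m := by positivity
  have h2' : V β₁ (m+1) < ((β₁-1)^(m+1))^2 * ((β₁-1)^2 - (2-β₁)^2/4) := by
    rw [Vpow β₁ hroot m]
    calc ((β₁-1)^2)^m * V β₁ 1
        < ((β₁-1)^2)^m * ((β₁-1)^2 * ((β₁-1)^2 - (2-β₁)^2/4)) :=
          (mul_lt_mul_iff_right₀ hppos).2 hkey
      _ = ((β₁-1)^(m+1))^2 * ((β₁-1)^2 - (2-β₁)^2/4) := by
          rw [show ((β₁-1)^(m+1))^2 = ((β₁-1)^2)^(m+1) from by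
            rw [← pow_mul, ← pow_mul, Nat.mul_comm]]
          ring
  have hsq2 : (E β₁ (m+1))^2 < ((β₁-1)^(m+1))^2 :=
    lt_of_mul_lt_mul_right (lt_of_le_of_lt hVb h2') hd.le
  have hpow : (0:ℝ) < (β₁-1)^(m+1) := pow_pos hβpos (m+1)
  show |E β₁ (m+1)| < (β₁-1)^(m+1)
  nlinarith [abs_nonneg (E β₁ (m+1)), sq_abs (E β₁ (m+1)), hpow, hsq2]
end

section
/- As n → ∞, the quotient (∑_{1 ≤ i ≤ n} X_{2i}) / X_{2n} tends to γ = (3 - β₁ + 2β₁²)/5, and moreover each such quotient is strictly less than γ. -/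
/-!
The even terms `Yₙ = X (2n)` satisfy `Yₙ₊₃ = 2Yₙ₊₂ + 3Yₙ₊₁ + Yₙ`, whose characteristic
polynomial has the dominant root `β₁²` and two complex roots of modulus `1/β₁`. Telescoping gives
`5 ∑_{i ≤ n} Yᵢ = Yₙ₊₂ - Yₙ₊₁ + Yₙ - 6`, so `γ - (∑_{i ≤ n} Yᵢ) / Yₙ = (6 + Dₙ) / (5Yₙ)`, where
`Dₙ = cYₙ + Yₙ₊₁ - Yₙ₊₂` with `c = 2 - β₁ + 2β₁²` has no component along `β₁²`. Hence `Dₙ` obeys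
a second-order recurrence whose invariant quadratic form shrinks by `β₁²` at each step; bounding it
by its initial value gives `|Dₙ| < 6`, and the claims follow since `Yₙ → ∞`.
-/

open Filter Topology Finset

section InvariantForm

variable {R : Type*} [CommRing R] {a p : R} {d : ℕ → R}

def invariantForm (a p : R) (d : ℕ → R) (n : ℕ) : R :=
  a * d (n + 1) ^ 2 + p * d (n + 1) * d n + d n ^ 2

theorem invariantForm_succ (h : ∀ n, a * d (n + 2) + p * d (n + 1) + d n = 0) (n : ℕ) :
    a * invariantForm a p d (n + 1) = invariantForm a p d n := by
  unfold invariantForm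
  linear_combination (a * d (n + 2) - d n) * h n

theorem pow_mul_invariantForm (h : ∀ n, a * d (n + 2) + p * d (n + 1) + d n = 0) (n : ℕ) :
    a ^ n * invariantForm a p d n = invariantForm a p d 0 := by
  induction n with
  | zero => simp
  | succ n ih => rw [pow_succ, mul_assoc, invariantForm_succ h, ih]

theorem four_mul_invariantForm (n : ℕ) :
    4 * a * invariantForm a p d n =
      (2 * a * d (n + 1) + p * d n) ^ 2 + (4 * a - p ^ 2) * d n ^ 2 := by
  unfold invariantForm
  ring

end InvariantForm

theorem sq_mul_le_invariantForm_zero {a p : ℝ} {d : ℕ → ℝ} (ha : 1 ≤ a) (hp : p ^ 2 < 4 * a)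
    (h : ∀ n, a * d (n + 2) + p * d (n + 1) + d n = 0) (n : ℕ) :
    (4 * a - p ^ 2) * d n ^ 2 ≤ 4 * a * invariantForm a p d 0 := by
  have hform := four_mul_invariantForm (a := a) (p := p) (d := d) n
  have hnonneg : 0 ≤ invariantForm a p d n := by
    have : 0 ≤ 4 * a * invariantForm a p d n := by
      rw [hform]
      have := sq_nonneg (d n)
      positivity
    nlinarith
  have hle : invariantForm a p d n ≤ invariantForm a p d 0 := by
    rw [← pow_mul_invariantForm h n]
    exact le_mul_of_one_le_left hnonneg (one_le_pow₀ ha)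
  nlinarith [sq_nonneg (2 * a * d (n + 1) + p * d n)]

theorem X_add_five (n : ℕ) : X (n + 5) = X (n + 4) + X (n + 3) + X (n + 1) := rfl

theorem X_lt_X_succ : ∀ n, X n < X (n + 1)
  | 0 | 1 | 2 | 3 => by decide
  | n + 4 => by
    have : X (n + 2) < X (n + 3) := X_lt_X_succ (n + 2)
    rw [X_add_five]
    omega

theorem strictMono_X : StrictMono X := strictMono_nat_of_lt_succ X_lt_X_succ

-- `(t⁴ - t³ - t² - 1)(t⁴ + t³ - t² + 1) = (t² - 1)(t⁶ - 2t⁴ - 3t² - 1)`, so the difference of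
-- this identity at `m + 2` and at `m` is a combination of the defining recurrence at four shifts.
theorem X_add_seven : ∀ m, X (m + 7) = 2 * X (m + 5) + 3 * X (m + 3) + X (m + 1)
  | 0 | 1 => rfl
  | m + 2 => by
    have := X_add_seven m
    have := X_add_five m
    have := X_add_five (m + 1)
    have := X_add_five (m + 2)
    have := X_add_five (m + 3)
    have := X_add_five (m + 4)
    simp only [Nat.add_assoc, Nat.reduceAdd] at *
    omega

theorem sum_X_even (n : ℕ) :
    5 * ∑ i ∈ Icc 1 (n + 1), X (2 * i) + X (2 * n + 4) + 6 = X (2 * n + 6) + X (2 * n + 2) := by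
  induction n with
  | zero => rfl
  | succ n ih =>
    rw [sum_Icc_succ_top (by omega), show 2 * (n + 1 + 1) = 2 * n + 4 by ring]
    have := X_add_seven (2 * n + 1)
    ring_nf at *
    omega

-- `Dₙ₊₁` of the header; `c = 2 - b + 2b²` makes `b²` a root of `t² - t - c` when `b = β₁`.
noncomputable def subdominant (b : ℝ) (n : ℕ) : ℝ :=
  (2 - b + 2 * b ^ 2) * X (2 * n + 2) + X (2 * n + 4) - X (2 * n + 6)

theorem ratio_eq (b : ℝ) (n : ℕ) :
    (∑ i ∈ Icc 1 (n + 1), (X (2 * i) : ℝ)) / X (2 * (n + 1)) =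
      (3 - b + 2 * b ^ 2) / 5 - (6 + subdominant b n) / (5 * X (2 * (n + 1))) := by
  have hX : (X (2 * (n + 1)) : ℝ) ≠ 0 := by
    exact_mod_cast (strictMono_X (by omega : 0 < 2 * (n + 1))).ne'
  have hsum : 5 * ∑ i ∈ Icc 1 (n + 1), (X (2 * i) : ℝ) + X (2 * n + 4) + 6
      = X (2 * n + 6) + X (2 * n + 2) := by
    exact_mod_cast sum_X_even n
  rw [show 2 * (n + 1) = 2 * n + 2 by ring] at *
  unfold subdominant
  field_simp
  linear_combination hsum

section Root

variable {b : ℝ} (hb : b ^ 3 - 2 * b ^ 2 + b - 1 = 0)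
include hb

theorem three_halves_lt : 3 / 2 < b := by
  have : (b - 3 / 2) * ((b - 1 / 4) ^ 2 + 3 / 16) = 5 / 8 := by linear_combination hb
  nlinarith [sq_nonneg (b - 1 / 4)]

theorem subdominant_rec (n : ℕ) :
    b ^ 2 * subdominant b (n + 2) + (b ^ 2 - b + 2) * subdominant b (n + 1) +
      subdominant b n = 0 := by
  have r1 : (X (2 * n + 8) : ℝ) = 2 * X (2 * n + 6) + 3 * X (2 * n + 4) + X (2 * n + 2) := by
    exact_mod_cast X_add_seven (2 * n + 1)
  have r2 : (X (2 * n + 10) : ℝ) = 2 * X (2 * n + 8) + 3 * X (2 * n + 6) + X (2 * n + 4) := by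
    exact_mod_cast X_add_seven (2 * n + 3)
  simp only [subdominant, Nat.mul_add, Nat.mul_one, Nat.add_assoc, Nat.reduceAdd]
  linear_combination (-(b ^ 2)) * r2 + (b - 2 - 2 * b ^ 2) * r1 +
    ((2 * b + 3) * (X (2 * n + 6) : ℝ) + (2 * b + 1) * (X (2 * n + 4) : ℝ)) * hb

theorem invariantForm_subdominant_zero :
    invariantForm (b ^ 2) (b ^ 2 - b + 2) (subdominant b) 0 = 7 * b ^ 2 - 11 * b - 2 := by
  simp only [invariantForm, subdominant, show X 2 = 2 from rfl, show X 4 = 7 from rfl,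
    show X 6 = 21 from rfl, show X 8 = 65 from rfl]
  norm_num
  linear_combination (252 * b ^ 3 + 196 * b ^ 2 - 713 * b - 702) * hb

theorem abs_subdominant_lt (n : ℕ) : |subdominant b n| < 6 := by
  have hb' := three_halves_lt hb
  have hp : (b ^ 2 - b + 2) ^ 2 = 4 * b ^ 2 - (3 * b - 4) := by linear_combination b * hb
  have h := sq_mul_le_invariantForm_zero (by nlinarith) (by rw [hp]; linarith)
    (subdominant_rec hb) n
  rw [invariantForm_subdominant_zero hb, hp] at h
  have h36 : 4 * b ^ 2 * (7 * b ^ 2 - 11 * b - 2) < 36 * (3 * b - 4) := by nlinarith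
  exact abs_lt_of_sq_lt_sq (by nlinarith) (by norm_num)

theorem gap_pos (n : ℕ) : 0 < (6 + subdominant b n) / (5 * X (2 * (n + 1))) := by
  have : 0 < X (2 * (n + 1)) := strictMono_X (by omega : 0 < 2 * (n + 1))
  exact div_pos (by linarith [(abs_lt.mp (abs_subdominant_lt hb n)).1]) (by positivity)

theorem tendsto_gap :
    Tendsto (fun n ↦ (6 + subdominant b n) / (5 * X (2 * (n + 1)))) atTop (𝓝 0) := by
  have hX : Tendsto (fun n : ℕ ↦ (X (2 * (n + 1)) : ℝ)) atTop atTop :=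
    tendsto_natCast_atTop_atTop.comp <| strictMono_X.tendsto_atTop.comp <|
      tendsto_id.const_mul_atTop' two_pos |>.comp (tendsto_add_atTop_nat 1)
  refine squeeze_zero (fun n ↦ (gap_pos hb n).le) (fun n ↦ ?_) <|
    (tendsto_const_nhds (x := (12 : ℝ))).div_atTop (hX.const_mul_atTop (by norm_num : (0 : ℝ) < 5))
  exact div_le_div_of_nonneg_right
    (by linarith [(abs_lt.mp (abs_subdominant_lt hb n)).2]) (by positivity)

end Root

theorem stmt8_general (β₁ : ℝ)
    (hroot : β₁^3 - 2*β₁^2 + β₁ - 1 = 0) :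
    Filter.Tendsto
      (fun n : ℕ => (∑ i ∈ Finset.Icc 1 n, (X (2*i) : ℝ)) / (X (2*n) : ℝ))
      Filter.atTop (nhds ((3 - β₁ + 2*β₁^2) / 5)) ∧
    ∀ n : ℕ, 1 ≤ n →
      (∑ i ∈ Finset.Icc 1 n, (X (2*i) : ℝ)) / (X (2*n) : ℝ)
        < (3 - β₁ + 2*β₁^2) / 5 := by
  refine ⟨?_, fun n hn ↦ ?_⟩
  · rw [← tendsto_add_atTop_iff_nat 1]
    simpa only [ratio_eq β₁, sub_zero] using tendsto_const_nhds.sub (tendsto_gap hroot)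
  · obtain ⟨m, rfl⟩ := Nat.exists_eq_add_of_le' hn
    rw [ratio_eq β₁]
    linarith [gap_pos hroot m]

theorem stmt8 (β₁ : ℝ)
    (hroot : β₁^3 - 2*β₁^2 + β₁ - 1 = 0)
    (huniq : ∀ x : ℝ, x^3 - 2*x^2 + x - 1 = 0 → x = β₁) :
    Filter.Tendsto
      (fun n : ℕ => (∑ i ∈ Finset.Icc 1 n, (X (2*i) : ℝ)) / (X (2*n) : ℝ))
      Filter.atTop (nhds ((3 - β₁ + 2*β₁^2) / 5)) ∧
    ∀ n : ℕ, 1 ≤ n →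
      (∑ i ∈ Finset.Icc 1 n, (X (2*i) : ℝ)) / (X (2*n) : ℝ)
        < (3 - β₁ + 2*β₁^2) / 5 :=
  stmt8_general β₁ hroot
end

section
/- The set of factors of the infinite word p is not closed under reversal: 02 is a factor of p, but 20 is not a factor of p. -/
/-- The morphism h : 0 → 01, 1 → 21, 2 → 0. -/
def h : ℕ → List ℕ
  | 0 => [0, 1]
  | 1 => [2, 1]
  | _ => [0]

/-- Apply the morphism h to a finite word. -/
def hword (w : List ℕ) : List ℕ := (w.map h).flatten

def IsFixedPoint (p : ℕ → ℕ) : Prop :=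
  (∀ n, p n < 3) ∧ p 0 = 0 ∧
  ∀ n k, k < (hword ((List.range n).map p)).length →
    (hword ((List.range n).map p)).getD k 0 = p k

def IsFactor (w : List ℕ) (p : ℕ → ℕ) : Prop :=
  ∃ i : ℕ, w = (List.range w.length).map fun j => p (i + j)

lemma hword_cons (a : ℕ) (w : List ℕ) : hword (a :: w) = h a ++ hword w := by
  simp [hword]

lemma hword_len (w : List ℕ) : w.length ≤ (hword w).length := by
  induction w with
  | nil => simp [hword]
  | cons a w ih =>
    rw [hword_cons]
    have : 1 ≤ (h a).length := by
      unfold h; split <;> simp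
    simp only [List.length_append, List.length_cons]
    omega

lemma two_then_one (w : List ℕ) : ∀ k, (hword w).getD k 0 = 2 →
    (hword w).getD (k+1) 0 = 1 := by
  induction w with
  | nil => intro k hk; simp [hword] at hk
  | cons a w ih =>
    intro k hk
    rw [hword_cons] at *
    match a, k with
    | 0, 0 => simp [h, List.getD] at hk
    | 0, 1 => simp [h, List.getD] at hk
    | 0, (k+2) =>
      simp only [h, List.cons_append, List.getD_cons_succ] at hk ⊢
      exact ih k hk
    | 1, 0 => simp [h, List.getD]
    | 1, 1 => simp [h, List.getD] at hk
    | 1, (k+2) =>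
      simp only [h, List.cons_append, List.getD_cons_succ] at hk ⊢
      exact ih k hk
    | (n+2), 0 => simp [h, List.getD] at hk
    | (n+2), (k+1) =>
      simp only [h, List.cons_append, List.getD_cons_succ] at hk ⊢
      exact ih k hk

theorem stmt11 (p : ℕ → ℕ) (hp : IsFixedPoint p) :
    IsFactor [0, 2] p ∧ ¬ IsFactor [2, 0] p := by
  obtain ⟨_, h0, hfix⟩ := hp
  have r1 : List.map p (List.range 1) = [0] := by rw [show List.range 1 = [0] from rfl]; simp [h0]
  have e1 : p 1 = 1 := by
    have := hfix 1 1 (by rw [r1]; decide)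
    rw [r1] at this
    simpa [hword, h] using this.symm
  have r2 : List.map p (List.range 2) = [0, 1] := by
    simp [List.range_succ, h0, e1]
  have e2 : p 2 = 2 := by
    have := hfix 2 2 (by rw [r2]; decide)
    rw [r2] at this
    simpa [hword, h] using this.symm
  have e3 : p 3 = 1 := by
    have := hfix 2 3 (by rw [r2]; decide)
    rw [r2] at this
    simpa [hword, h] using this.symm
  have r4 : List.map p (List.range 4) = [0, 1, 2, 1] := by
    simp [List.range_succ, h0, e1, e2, e3]
  have e4 : p 4 = 0 := by
    have := hfix 4 4 (by rw [r4]; decide)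
    rw [r4] at this
    simpa [hword, h] using this.symm
  have e5 : p 5 = 2 := by
    have := hfix 4 5 (by rw [r4]; decide)
    rw [r4] at this
    simpa [hword, h] using this.symm
  constructor
  · exact ⟨4, by simp [List.range_succ, e4, e5]⟩
  · rintro ⟨i, hi⟩
    simp [List.range_succ] at hi
    obtain ⟨hi2, hi0⟩ := hi
    have hl : i + 1 < (hword ((List.range (i+2)).map p)).length := by
      have := hword_len ((List.range (i+2)).map p)
      simp at this; omega
    have ei := hfix (i+2) i (by omega)
    have ei1 := hfix (i+2) (i+1) hl
    have ei' : (hword ((List.range (i+2)).map p)).getD i 0 = 2 := ei.trans hi2.symm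
    have h1 := two_then_one _ i ei'
    rw [ei1] at h1
    omega
end

section
/- The frequency of the letter 1 in p equals 1/β₁² + 1/β₁⁴, and the frequency of the letter 2 in p equals 1/β₁³ + 1/β₁⁵, where β₁ is the real root of X³ - 2X² + X - 1. -/
open Filter Topology

theorem norm_le_of_forall_exists_lt_norm_sub_le {𝕜 E : Type*} [NontriviallyNormedField 𝕜]
    [SeminormedAddCommGroup E] [NormedSpace 𝕜 E] (T : E →L[𝕜] E) {ρ C : ℝ}
    (hρ₀ : 0 ≤ ρ) (hρ : ρ < 1) (hT : ∀ v, ‖T (T v)‖ ≤ ρ * ‖v‖) {u : ℕ → E} (hu₀ : u 0 = 0)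
    (hu : ∀ N, 0 < N → ∃ m < N, ‖u N - T (u m)‖ ≤ C) (N : ℕ) :
    ‖u N‖ ≤ (‖T‖ + 1) * C / (1 - ρ) := by
  set B := (‖T‖ + 1) * C / (1 - ρ)
  have hC : 0 ≤ C := by
    obtain ⟨m, -, hm⟩ := hu 1 one_pos
    exact (norm_nonneg _).trans hm
  have hCB : C ≤ B := by
    rw [le_div_iff₀ (by linarith)]
    nlinarith [norm_nonneg T]
  have hB : ρ * B + (‖T‖ + 1) * C = B := by
    have : 1 - ρ ≠ 0 := by linarith
    simp only [B]; field_simp; ring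
  induction N using Nat.strong_induction_on with
  | _ N ih =>
    rcases N.eq_zero_or_pos with rfl | hN
    · simpa [hu₀] using hCB.trans' hC
    obtain ⟨m, hmN, hm⟩ := hu N hN
    rcases m.eq_zero_or_pos with rfl | hm₀
    · simpa [hu₀] using hm.trans hCB
    obtain ⟨k, hkm, hk⟩ := hu m hm₀
    have hsplit : u N = (u N - T (u m)) + T (u m - T (u k)) + T (T (u k)) := by
      simp
    calc ‖u N‖ = ‖(u N - T (u m)) + T (u m - T (u k)) + T (T (u k))‖ := congrArg _ hsplit
      _ ≤ ‖u N - T (u m)‖ + ‖T (u m - T (u k))‖ + ‖T (T (u k))‖ := norm_add₃_le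
      _ ≤ C + ‖T‖ * C + ρ * B := by
          gcongr
          · exact T.le_opNorm_of_le hk
          · exact (hT _).trans (by gcongr; exact ih k (hkm.trans hmN))
      _ = B := by linarith

theorem tendsto_div_of_abs_sub_mul_le {u : ℕ → ℝ} {f B : ℝ} (hu : ∀ N, |u N - f * N| ≤ B) :
    Tendsto (fun N : ℕ => u N / N) atTop (𝓝 f) := by
  have hD : Tendsto (fun N : ℕ => (u N - f * N) / N) atTop (𝓝 0) := by
    refine squeeze_zero_norm (fun N => ?_) (tendsto_const_div_atTop_nhds_zero_nat B)
    rw [norm_div, Real.norm_natCast]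
    exact div_le_div_of_nonneg_right (hu N) N.cast_nonneg
  refine (by simpa using hD.const_add f : Tendsto _ atTop (𝓝 f)).congr' ?_
  filter_upwards [eventually_ne_atTop 0] with N hN
  field_simp
  ring

theorem exists_lt_le_le_add_one {L : ℕ → ℕ} (h₀ : L 0 = 0)
    (hL : ∀ m, L m + 1 ≤ L (m + 1) ∧ L (m + 1) ≤ L m + 2) :
    ∀ N, 0 < N → ∃ m < N, L m ≤ N ∧ N ≤ L m + 1 := by
  intro N hN
  induction N, hN using Nat.le_induction with
  | base => exact ⟨0, one_pos, by omega⟩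
  | succ N hN ih =>
    obtain ⟨m, hmN, hm⟩ := ih
    by_cases hNm : N + 1 ≤ L m + 1
    · exact ⟨m, by omega, by omega, hNm⟩
    · exact ⟨m + 1, by omega, by have := hL m; omega⟩

theorem count_one_hword (w : List ℕ) : (hword w).count 1 = w.count 0 + w.count 1 := by
  induction w with
  | nil => rfl
  | cons a w ih =>
    rcases a with _ | _ | a <;> simp_all [hword, h] <;> omega

theorem count_two_hword (w : List ℕ) : (hword w).count 2 = w.count 1 := by
  induction w with
  | nil => rfl
  | cons a w ih =>
    rcases a with _ | _ | a <;> simp_all [hword, h]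

theorem length_hword (w : List ℕ) : (hword w).length = w.length + w.count 0 + w.count 1 := by
  induction w with
  | nil => rfl
  | cons a w ih =>
    rcases a with _ | _ | a <;> simp_all [hword, h] <;> omega

def prefixWord (p : ℕ → ℕ) (N : ℕ) : List ℕ := (List.range N).map p

theorem length_prefixWord (p : ℕ → ℕ) (N : ℕ) : (prefixWord p N).length = N := by
  simp [prefixWord]

theorem count_prefixWord_succ (p : ℕ → ℕ) (a N : ℕ) :
    (prefixWord p (N + 1)).count a = (prefixWord p N).count a + if p N = a then 1 else 0 := by
  simp [prefixWord, List.range_succ, List.count_singleton]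

namespace IsFixedPoint

theorem count_zero_add_count_one_add_count_two {p : ℕ → ℕ} (hp : IsFixedPoint p) (N : ℕ) :
    (prefixWord p N).count 0 + (prefixWord p N).count 1 + (prefixWord p N).count 2 = N := by
  induction N with
  | zero => rfl
  | succ N ih =>
    simp only [count_prefixWord_succ]
    have := hp.1 N
    interval_cases p N <;> simp <;> omega

theorem prefixWord_length_hword {p : ℕ → ℕ} (hp : IsFixedPoint p) (m : ℕ) :
    prefixWord p (hword (prefixWord p m)).length = hword (prefixWord p m) := by
  refine List.ext_getElem (length_prefixWord _ _) fun k hk hk' => ?_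
  have : (hword (prefixWord p m)).getD k 0 = p k := hp.2.2 m k hk'
  rw [List.getD_eq_getElem _ 0 hk'] at this
  simp only [← this, prefixWord, List.getElem_map, List.getElem_range]

end IsFixedPoint

/- Since β(β - 1)² = 1, the frequencies 1/β² + 1/β⁴ and 1/β³ + 1/β⁵ of the letters 1 and 2
are the polynomials β(2 - β) and 2 - β. -/
noncomputable def discrepancy (p : ℕ → ℕ) (β : ℝ) (N : ℕ) : ℝ × ℝ :=
  ((prefixWord p N).count 1 - β * (2 - β) * N, (prefixWord p N).count 2 - (2 - β) * N)

def discrepancyStep (β : ℝ) : ℝ × ℝ →L[ℝ] ℝ × ℝ :=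
  (-(β - 1) ^ 2 • ContinuousLinearMap.snd ℝ ℝ ℝ).prod
    (ContinuousLinearMap.fst ℝ ℝ ℝ + (2 - β) • ContinuousLinearMap.snd ℝ ℝ ℝ)

@[simp]
theorem discrepancyStep_apply (β x y : ℝ) :
    discrepancyStep β (x, y) = (-(β - 1) ^ 2 * y, x + (2 - β) * y) := by
  simp [discrepancyStep]

theorem discrepancy_zero (p : ℕ → ℕ) (β : ℝ) : discrepancy p β 0 = 0 := by
  simp [discrepancy, prefixWord]

theorem norm_discrepancy_succ_sub_le (p : ℕ → ℕ) {β : ℝ} (h₁ : 1 ≤ β) (h₂ : β ≤ 2) (N : ℕ) :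
    ‖discrepancy p β (N + 1) - discrepancy p β N‖ ≤ 1 := by
  simp only [discrepancy, count_prefixWord_succ, Prod.norm_def, Prod.fst_sub, Prod.snd_sub,
    Real.norm_eq_abs]
  push_cast
  refine max_le ?_ ?_ <;> rw [abs_le] <;> split_ifs <;> constructor <;> nlinarith

theorem IsFixedPoint.discrepancy_length_hword {p : ℕ → ℕ} (hp : IsFixedPoint p) {β : ℝ}
    (hβ : β ^ 3 - 2 * β ^ 2 + β - 1 = 0) (m : ℕ) :
    discrepancy p β (hword (prefixWord p m)).length = discrepancyStep β (discrepancy p β m) := by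
  have hsum : ((prefixWord p m).count 0 : ℝ) + (prefixWord p m).count 1
      + (prefixWord p m).count 2 = m := by
    exact_mod_cast hp.count_zero_add_count_one_add_count_two m
  rw [discrepancy, discrepancy, discrepancyStep_apply, hp.prefixWord_length_hword, count_one_hword,
    count_two_hword, length_hword, length_prefixWord]
  push_cast
  ext
  · linear_combination (m : ℝ) * hβ + (β - 1) ^ 2 * hsum
  · linear_combination (β - 2) * hsum

theorem IsFixedPoint.exists_lt_norm_discrepancy_sub_le {p : ℕ → ℕ} (hp : IsFixedPoint p) {β : ℝ}
    (hβ : β ^ 3 - 2 * β ^ 2 + β - 1 = 0) (h₁ : 1 ≤ β) (h₂ : β ≤ 2) (N : ℕ) (hN : 0 < N) :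
    ∃ m < N, ‖discrepancy p β N - discrepancyStep β (discrepancy p β m)‖ ≤ 1 := by
  have hL : ∀ m, (hword (prefixWord p m)).length + 1 ≤ (hword (prefixWord p (m + 1))).length ∧
      (hword (prefixWord p (m + 1))).length ≤ (hword (prefixWord p m)).length + 2 := by
    intro m
    simp only [length_hword, length_prefixWord, count_prefixWord_succ]
    split_ifs <;> omega
  obtain ⟨m, hmN, hm⟩ := exists_lt_le_le_add_one (by rfl) hL N hN
  refine ⟨m, hmN, ?_⟩
  rw [← hp.discrepancy_length_hword hβ]
  rcases (by omega : N = (hword (prefixWord p m)).length ∨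
    N = (hword (prefixWord p m)).length + 1) with rfl | rfl
  · simp
  · exact norm_discrepancy_succ_sub_le p h₁ h₂ _

theorem abs_mul_add_mul_le_of_norm_le {a b r : ℝ} (v : ℝ × ℝ) (hv : ‖v‖ ≤ r) :
    |a * v.1 + b * v.2| ≤ (|a| + |b|) * r := by
  have h₁ : |v.1| ≤ r := (norm_fst_le v).trans hv
  have h₂ : |v.2| ≤ r := (norm_snd_le v).trans hv
  calc |a * v.1 + b * v.2| ≤ |a| * |v.1| + |b| * |v.2| := by
        rw [← abs_mul, ← abs_mul]; exact abs_add_le _ _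
    _ ≤ (|a| + |b|) * r := by
        rw [add_mul]; gcongr

theorem norm_discrepancyStep_discrepancyStep_le {β : ℝ} (h₁ : 17 / 10 ≤ β) (h₂ : β ≤ 9 / 5)
    (v : ℝ × ℝ) : ‖discrepancyStep β (discrepancyStep β v)‖ ≤ 9 / 10 * ‖v‖ := by
  obtain ⟨x, y⟩ := v
  have hfst : |-(β - 1) ^ 2| + |-(β - 1) ^ 2 * (2 - β)| ≤ 9 / 10 := by
    rw [abs_neg, abs_of_nonneg (by positivity), abs_of_nonpos (by nlinarith)]
    nlinarith
  have hsnd : |2 - β| + |(2 - β) ^ 2 - (β - 1) ^ 2| ≤ 9 / 10 := by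
    rw [abs_of_nonneg (by linarith), abs_of_nonpos (by nlinarith)]
    nlinarith
  rw [discrepancyStep_apply, discrepancyStep_apply, Prod.norm_mk]
  refine max_le ?_ ?_
  · calc _ = |-(β - 1) ^ 2 * x + -(β - 1) ^ 2 * (2 - β) * y| := by
          rw [Real.norm_eq_abs]; congr 1; ring
      _ ≤ 9 / 10 * ‖(x, y)‖ :=
        (abs_mul_add_mul_le_of_norm_le (x, y) le_rfl).trans (by gcongr)
  · calc _ = |(2 - β) * x + ((2 - β) ^ 2 - (β - 1) ^ 2) * y| := by
          rw [Real.norm_eq_abs]; dsimp only; congr 1; ring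
      _ ≤ 9 / 10 * ‖(x, y)‖ :=
        (abs_mul_add_mul_le_of_norm_le (x, y) le_rfl).trans (by gcongr)

theorem mem_Icc_of_cubic_eq_zero {β : ℝ} (hβ : β ^ 3 - 2 * β ^ 2 + β - 1 = 0) :
    β ∈ Set.Icc (17 / 10) (9 / 5) := by
  constructor <;> nlinarith [sq_nonneg (β - 1), sq_nonneg (β - 1 / 3), sq_nonneg β]

theorem stmt14_general (p : ℕ → ℕ) (hp : IsFixedPoint p) (β₁ : ℝ)
    (hroot : β₁^3 - 2*β₁^2 + β₁ - 1 = 0) :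
    Filter.Tendsto
      (fun N : ℕ => (((List.range N).map p).count 1 : ℝ) / N)
      Filter.atTop (nhds (1 / β₁^2 + 1 / β₁^4)) ∧
    Filter.Tendsto
      (fun N : ℕ => (((List.range N).map p).count 2 : ℝ) / N)
      Filter.atTop (nhds (1 / β₁^3 + 1 / β₁^5)) := by
  obtain ⟨h₁, h₂⟩ := mem_Icc_of_cubic_eq_zero hroot
  have hD := norm_le_of_forall_exists_lt_norm_sub_le (discrepancyStep β₁) (by norm_num)
    (by norm_num) (norm_discrepancyStep_discrepancyStep_le h₁ h₂) (discrepancy_zero p β₁)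
    (hp.exists_lt_norm_discrepancy_sub_le hroot (by linarith) (by linarith))
  have hβ₁ : β₁ ≠ 0 := by positivity
  have hf₁ : 1 / β₁ ^ 2 + 1 / β₁ ^ 4 = β₁ * (2 - β₁) := by
    field_simp
    linear_combination (β₁ ^ 3 - β₁ - 1) * hroot
  have hf₂ : 1 / β₁ ^ 3 + 1 / β₁ ^ 5 = 2 - β₁ := by
    field_simp
    linear_combination (β₁ ^ 3 - β₁ - 1) * hroot
  rw [hf₁, hf₂]
  exact ⟨tendsto_div_of_abs_sub_mul_le fun N => (norm_fst_le _).trans (hD N),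
    tendsto_div_of_abs_sub_mul_le fun N => (norm_snd_le _).trans (hD N)⟩

theorem stmt14 (p : ℕ → ℕ) (hp : IsFixedPoint p) (β₁ : ℝ)
    (hroot : β₁^3 - 2*β₁^2 + β₁ - 1 = 0)
    (huniq : ∀ x : ℝ, x^3 - 2*x^2 + x - 1 = 0 → x = β₁) :
    Filter.Tendsto
      (fun N : ℕ => (((List.range N).map p).count 1 : ℝ) / N)
      Filter.atTop (nhds (1 / β₁^2 + 1 / β₁^4)) ∧
    Filter.Tendsto
      (fun N : ℕ => (((List.range N).map p).count 2 : ℝ) / N)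
      Filter.atTop (nhds (1 / β₁^3 + 1 / β₁^5)) :=
  stmt14_general p hp β₁ hroot
end

section
/- If a bi-infinite word w over {0,1,2} avoids the factors 00, 11, 22, 20, and 212, then every factor of w of the form 0z0 with z ∈ {1,2}* belongs to {010, 01210, 0210}, and consequently w is a bi-infinite product of the blocks 01, 21, 0 (i.e., w = h(v) for some bi-infinite word v, where h: 0 → 01, 1 → 21, 2 → 0). -/
/-- `f` is a factor of the bi-infinite word `w : ℤ → ℕ`. -/
def IsFactorZ (f : List ℕ) (w : ℤ → ℕ) : Prop :=
  ∃ i : ℤ, f = (List.range f.length).map fun j => w (i + j)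

lemma flatMap_sing (l : List ℕ) (g : ℕ → ℤ) : (l.flatMap fun a => [g a]) = l.map g := by
  induction l <;> simp_all

lemma factor_pt {f : List ℕ} {w : ℤ → ℕ} (hfac : IsFactorZ f w) :
    ∃ i, ∀ j, j < f.length → f.getD j 0 = w (i + j) := by
  obtain ⟨i, hf⟩ := hfac
  simp only [List.pure_def, List.bind_eq_flatMap, flatMap_sing, List.map_map] at hf
  refine ⟨i, fun j hj => ?_⟩
  conv_lhs => rw [hf]
  rw [List.getD_eq_getElem _ _ (by simpa using hj)]
  simp

lemma factor_of_pt {w : ℤ → ℕ} (f : List ℕ) (i : ℤ)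
    (hp : ∀ j, j < f.length → f.getD j 0 = w (i + j)) : IsFactorZ f w := by
  refine ⟨i, ?_⟩
  simp only [List.pure_def, List.bind_eq_flatMap, flatMap_sing, List.map_map]
  apply List.ext_getElem (by simp)
  intro n h1 h2
  simp only [List.getElem_map, List.getElem_range, Function.comp]
  rw [← hp n h1, List.getD_eq_getElem _ _ h1]

def nextS (w : ℤ → ℕ) (m : ℤ) : ℤ := if w (m+1) = 1 then m + 2 else m + 1
def prevS (w : ℤ → ℕ) (m : ℤ) : ℤ := if w (m-1) = 1 then m - 2 else m - 1
def sPos (w : ℤ → ℕ) : ℕ → ℤ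
  | 0 => if w 0 = 1 then 1 else 0
  | n+1 => nextS w (sPos w n)
def sNeg (w : ℤ → ℕ) : ℕ → ℤ
  | 0 => if w 0 = 1 then 1 else 0
  | n+1 => prevS w (sNeg w n)
def sZ (w : ℤ → ℕ) : ℤ → ℤ
  | .ofNat n => sPos w n
  | .negSucc n => sNeg w (n+1)

theorem stmt16 (w : ℤ → ℕ) (hw3 : ∀ n, w n < 3)
    (havoid : ∀ f ∈ [[0,0], [1,1], [2,2], [2,0], [2,1,2]], ¬ IsFactorZ f w) :
    (∀ z : List ℕ, (∀ a ∈ z, a = 1 ∨ a = 2) →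
        IsFactorZ (0 :: z ++ [0]) w →
        0 :: z ++ [0] ∈ [[0,1,0], [0,1,2,1,0], [0,2,1,0]]) ∧
    ∃ (v : ℤ → ℕ) (s : ℤ → ℤ),
      (∀ n, v n < 3) ∧
      (∀ k : ℤ, s (k+1) = s k + (h (v k)).length) ∧
      (∀ (k : ℤ) (j : ℕ), j < (h (v k)).length →
        w (s k + j) = (h (v k)).getD j 0) := by
  have no00 : ∀ p : ℤ, w p = 0 → w (p+1) = 0 → False := fun p h1 h2 =>
    havoid [0,0] (by simp) (factor_of_pt _ p (by
      intro j hj; simp at hj; interval_cases j <;> simp_all))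
  have no11 : ∀ p : ℤ, w p = 1 → w (p+1) = 1 → False := fun p h1 h2 =>
    havoid [1,1] (by simp) (factor_of_pt _ p (by
      intro j hj; simp at hj; interval_cases j <;> simp_all))
  have no22 : ∀ p : ℤ, w p = 2 → w (p+1) = 2 → False := fun p h1 h2 =>
    havoid [2,2] (by simp) (factor_of_pt _ p (by
      intro j hj; simp at hj; interval_cases j <;> simp_all))
  have no20 : ∀ p : ℤ, w p = 2 → w (p+1) = 0 → False := fun p h1 h2 =>
    havoid [2,0] (by simp) (factor_of_pt _ p (by
      intro j hj; simp at hj; interval_cases j <;> simp_all))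
  have no212 : ∀ p : ℤ, w p = 2 → w (p+1) = 1 → w (p+2) = 2 → False := fun p h1 h2 h3 =>
    havoid [2,1,2] (by simp) (factor_of_pt _ p (by
      intro j hj; simp at hj; interval_cases j <;> simp_all))
  have two_one : ∀ p : ℤ, w p = 2 → w (p+1) = 1 := by
    intro p hp
    have h3 := hw3 (p+1)
    have : w (p+1) = 0 ∨ w (p+1) = 1 ∨ w (p+1) = 2 := by omega
    rcases this with h|h|h
    · exact absurd (no20 p hp h) not_false
    · exact h
    · exact absurd (no22 p hp h) not_false
  constructor
  · intro z hz hfac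
    obtain ⟨i, hp⟩ := factor_pt hfac
    match z, hz with
    | [], _ =>
      exfalso
      have e0 : w (i+0) = 0 := by have := hp 0 (by simp); simpa using this.symm
      have e1 : w (i+1) = 0 := by have := hp 1 (by simp); simpa using this.symm
      exact no00 i (by simpa using e0) (by simpa using e1)
    | [a], hz =>
      have e1 : w (i+1) = a := by have := hp 1 (by simp); simpa using this.symm
      have e2 : w (i+2) = 0 := by have := hp 2 (by simp); simpa using this.symm
      rcases hz a (by simp) with rfl | rfl
      · simp
      · exact absurd (no20 (i+1) e1 (by rw [show i+1+1 = i+2 by ring]; exact e2)) not_false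
    | [a,b], hz =>
      have e1 : w (i+1) = a := by have := hp 1 (by simp); simpa using this.symm
      have e2 : w (i+2) = b := by have := hp 2 (by simp); simpa using this.symm
      have e3 : w (i+3) = 0 := by have := hp 3 (by simp); simpa using this.symm
      rcases hz b (by simp) with rfl | rfl
      · rcases hz a (by simp) with rfl | rfl
        · exact absurd (no11 (i+1) e1 (by rw [show i+1+1 = i+2 by ring]; exact e2)) not_false
        · simp
      · exact absurd (no20 (i+2) e2 (by rw [show i+2+1 = i+3 by ring]; exact e3)) not_false
    | [a,b,c], hz =>
      have e1 : w (i+1) = a := by have := hp 1 (by simp); simpa using this.symm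
      have e2 : w (i+2) = b := by have := hp 2 (by simp); simpa using this.symm
      have e3 : w (i+3) = c := by have := hp 3 (by simp); simpa using this.symm
      have e4 : w (i+4) = 0 := by have := hp 4 (by simp); simpa using this.symm
      rcases hz c (by simp) with rfl | rfl
      · rcases hz b (by simp) with rfl | rfl
        · exact absurd (no11 (i+2) e2 (by rw [show i+2+1 = i+3 by ring]; exact e3)) not_false
        · rcases hz a (by simp) with rfl | rfl
          · simp
          · exact absurd (no22 (i+1) e1 (by rw [show i+1+1 = i+2 by ring]; exact e2)) not_false
      · exact absurd (no20 (i+3) e3 (by rw [show i+3+1 = i+4 by ring]; exact e4)) not_false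
    | a::b::c::d::t, hz =>
      exfalso
      have e1 : w (i+1) = a := by have := hp 1 (by simp); simpa using this.symm
      have e2 : w (i+2) = b := by have := hp 2 (by simp); simpa using this.symm
      have e3 : w (i+3) = c := by have := hp 3 (by simp); simpa using this.symm
      have e4 : w (i+4) = d := by have := hp 4 (by simp); simpa using this.symm
      rcases hz a (by simp) with rfl | rfl <;>
        rcases hz b (by simp) with rfl | rfl <;>
          rcases hz c (by simp) with rfl | rfl <;>
            rcases hz d (by simp) with rfl | rfl
      all_goals first
      | exact no11 (i+1) e1 (by rw [show i+1+1 = i+2 by ring]; exact e2)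
      | exact no22 (i+1) e1 (by rw [show i+1+1 = i+2 by ring]; exact e2)
      | exact no11 (i+2) e2 (by rw [show i+2+1 = i+3 by ring]; exact e3)
      | exact no22 (i+2) e2 (by rw [show i+2+1 = i+3 by ring]; exact e3)
      | exact no11 (i+3) e3 (by rw [show i+3+1 = i+4 by ring]; exact e4)
      | exact no22 (i+3) e3 (by rw [show i+3+1 = i+4 by ring]; exact e4)
      | exact no212 (i+1) e1 (by rw [show i+1+1 = i+2 by ring]; exact e2)
          (by rw [show i+1+2 = i+3 by ring]; exact e3)
      | exact no212 (i+2) e2 (by rw [show i+2+1 = i+3 by ring]; exact e3)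
          (by rw [show i+2+2 = i+4 by ring]; exact e4)
  · have start0 : w (sPos w 0) ≠ 1 := by
      unfold sPos
      split
      · intro hc
        exact no11 0 (by assumption) (by simpa using hc)
      · assumption
    have next_start : ∀ m : ℤ, w (nextS w m) ≠ 1 := by
      intro m
      unfold nextS
      split
      · intro hc
        exact no11 (m+1) (by assumption) (by rw [show m+1+1 = m+2 by ring]; exact hc)
      · assumption
    have prev_start : ∀ m : ℤ, w (prevS w m) ≠ 1 := by
      intro m
      unfold prevS
      split
      · intro hc
        exact no11 (m-2) hc (by rw [show m-2+1 = m-1 by ring]; assumption)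
      · assumption
    have next_prev : ∀ m : ℤ, w m ≠ 1 → nextS w (prevS w m) = m := by
      intro m hm
      unfold prevS
      by_cases hc : w (m-1) = 1
      · rw [if_pos hc]
        unfold nextS
        rw [show m-2+1 = m-1 by ring, if_pos hc]
        ring
      · rw [if_neg hc]
        unfold nextS
        rw [show m-1+1 = m by ring, if_neg hm]
    have startZ : ∀ k : ℤ, w (sZ w k) ≠ 1 := by
      intro k
      cases k with
      | ofNat n =>
        induction n with
        | zero => exact start0
        | succ n _ => exact next_start _
      | negSucc n =>
        show w (sNeg w (n+1)) ≠ 1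
        exact prev_start _
    have stepZ : ∀ k : ℤ, sZ w (k+1) = nextS w (sZ w k) := by
      intro k
      cases k with
      | ofNat n =>
        show sZ w (Int.ofNat n + 1) = nextS w (sPos w n)
        rw [show (Int.ofNat n : ℤ) + 1 = Int.ofNat (n+1) by simp]
        rfl
      | negSucc n =>
        cases n with
        | zero =>
          show sZ w 0 = nextS w (sNeg w 1)
          have : sNeg w 1 = prevS w (sNeg w 0) := rfl
          rw [this]
          have h0 : sNeg w 0 = sPos w 0 := rfl
          rw [h0, next_prev _ start0]
          rfl
        | succ n =>
          have := next_prev (sNeg w (n+1)) (startZ (Int.negSucc n))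
          exact this.symm
    refine ⟨fun k => if w (sZ w k) = 2 then 1 else if w (sZ w k + 1) = 1 then 0 else 2,
      sZ w, ?_, ?_, ?_⟩
    · intro n
      dsimp only
      split
      · omega
      · split <;> omega
    · intro k
      rw [stepZ k]
      dsimp only
      set m := sZ w k with hm
      by_cases h2 : w m = 2
      · have h21 : w (m+1) = 1 := two_one m h2
        simp only [h2, if_pos rfl]
        unfold nextS
        rw [if_pos h21]
        simp [h]
      · rw [if_neg h2]
        by_cases h1 : w (m+1) = 1
        · rw [if_pos h1]
          unfold nextS
          rw [if_pos h1]
          simp [h]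
        · rw [if_neg h1]
          unfold nextS
          rw [if_neg h1]
          simp [h]
    · intro k j hj
      dsimp only at hj ⊢
      set m := sZ w k with hm
      have hm1 : w m ≠ 1 := startZ k
      by_cases h2 : w m = 2
      · have h21 : w (m+1) = 1 := two_one m h2
        simp only [h2, if_pos rfl] at hj ⊢
        simp [h] at hj
        simp only [h]
        interval_cases j
        · simpa using h2
        · simpa using h21
      · rw [if_neg h2] at hj ⊢
        have h0 : w m = 0 := by have := hw3 m; omega
        by_cases h1 : w (m+1) = 1
        · rw [if_pos h1] at hj ⊢
          simp [h] at hj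
          simp only [h]
          interval_cases j
          · simpa using h0
          · simpa using h1
        · rw [if_neg h1] at hj ⊢
          simp [h] at hj
          subst hj
          simp only [h]
          simpa using h0
end

section
/- The word p avoids cubes: no nonempty factor of the form xxx occurs in p. Equivalently, every nonempty factor of p has exponent less than 3. -/
namespace S18
set_option linter.unusedSectionVars false

def Per (p : ℕ → ℕ) (i m K : ℕ) : Prop := ∀ k < K, p (i + k) = p (i + k + m)

def Bk (p : ℕ → ℕ) (n : ℕ) : ℕ := (hword ((List.range n).map p)).length

section
variable {p : ℕ → ℕ} (hp : IsFixedPoint p)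

lemma hcases (a : ℕ) (ha : a < 3) :
    (a = 0 ∧ h a = [0,1]) ∨ (a = 1 ∧ h a = [2,1]) ∨ (a = 2 ∧ h a = [0]) := by
  interval_cases a <;> simp [h]

lemma Wsucc (n : ℕ) :
    hword ((List.range (n+1)).map p) = hword ((List.range n).map p) ++ h (p n) := by
  unfold hword
  rw [List.range_succ, List.map_append, List.map_append, List.flatten_append]
  simp

lemma Bksucc (n : ℕ) : Bk p (n+1) = Bk p n + (h (p n)).length := by
  unfold Bk; rw [Wsucc]; simp

lemma hlen_pos (a : ℕ) : 0 < (h a).length := by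
  match a with
  | 0 => simp [h]
  | 1 => simp [h]
  | (n+2) => simp [h]

lemma hlen_le (a : ℕ) : (h a).length ≤ 2 := by
  match a with
  | 0 => simp [h]
  | 1 => simp [h]
  | (n+2) => simp [h]

lemma Bk0 : Bk p 0 = 0 := by simp [Bk, hword]

lemma Bklt (n : ℕ) : Bk p n < Bk p (n+1) := by
  rw [Bksucc]; have := hlen_pos (p n); omega

lemma Bkmono : StrictMono (Bk p) := strictMono_nat_of_lt_succ (Bklt)

lemma Bkadd (c k : ℕ) : Bk p c + k ≤ Bk p (c + k) := by
  induction k with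
  | zero => simp
  | succ k ih =>
    have h1 := Bklt (p := p) (c + k)
    have h2 : c + (k + 1) = (c + k) + 1 := by omega
    rw [h2]; omega

lemma Bkstep (n : ℕ) : Bk p (n+1) ≤ Bk p n + 2 := by
  rw [Bksucc]; have := hlen_le (p n); omega

include hp

lemma pB (n j : ℕ) (hj : j < (h (p n)).length) : p (Bk p n + j) = (h (p n)).getD j 0 := by
  have h1 : Bk p n + j < Bk p (n+1) := by rw [Bksucc]; omega
  have h2 := hp.2.2 (n+1) (Bk p n + j) h1
  rw [Wsucc] at h2
  rw [← h2]
  have hlen : (hword ((List.range n).map p)).length = Bk p n := rfl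
  rw [List.getD_append_right _ _ _ _ (by rw [hlen]; omega)]
  rw [hlen]
  congr 1
  omega

lemma blockcases (n : ℕ) :
    (p n = 0 ∧ p (Bk p n) = 0 ∧ p (Bk p n + 1) = 1 ∧ Bk p (n+1) = Bk p n + 2) ∨
    (p n = 1 ∧ p (Bk p n) = 2 ∧ p (Bk p n + 1) = 1 ∧ Bk p (n+1) = Bk p n + 2) ∨
    (p n = 2 ∧ p (Bk p n) = 0 ∧ Bk p (n+1) = Bk p n + 1) := by
  rcases hcases (p n) (hp.1 n) with ⟨e, he⟩ | ⟨e, he⟩ | ⟨e, he⟩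
  · left
    refine ⟨e, ?_, ?_, ?_⟩
    · have := pB hp n 0 (by rw [he]; simp); rw [he] at this; simpa using this
    · have := pB hp n 1 (by rw [he]; simp); rw [he] at this; simpa using this
    · rw [Bksucc, he]; rfl
  · right; left
    refine ⟨e, ?_, ?_, ?_⟩
    · have := pB hp n 0 (by rw [he]; simp); rw [he] at this; simpa using this
    · have := pB hp n 1 (by rw [he]; simp); rw [he] at this; simpa using this
    · rw [Bksucc, he]; rfl
  · right; right
    refine ⟨e, ?_, ?_⟩
    · have := pB hp n 0 (by rw [he]; simp); rw [he] at this; simpa using this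
    · rw [Bksucc, he]; rfl

lemma cover (j : ℕ) : ∃ n, Bk p n ≤ j ∧ j < Bk p (n+1) := by
  induction j with
  | zero =>
    refine ⟨0, ?_, ?_⟩
    · rw [Bk0]
    · have h1 := Bklt (p := p) 0
      have h2 : Bk p 0 = 0 := Bk0
      omega
  | succ j ih =>
    obtain ⟨n, h1, h2⟩ := ih
    by_cases hc : j + 1 < Bk p (n+1)
    · exact ⟨n, by omega, hc⟩
    · have h3 : Bk p (n+1) = j + 1 := by omega
      have h4 := Bklt (p := p) (n+1)
      exact ⟨n+1, by omega, by omega⟩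

lemma start_letter (n : ℕ) : p (Bk p n) ≠ 1 := by
  rcases blockcases hp n with ⟨_, h1, _, _⟩ | ⟨_, h1, _, _⟩ | ⟨_, h1, _⟩ <;> omega

lemma exists_start (j : ℕ) (hj : p j ≠ 1) : ∃ n, Bk p n = j := by
  obtain ⟨n, h1, h2⟩ := cover hp j
  rcases eq_or_lt_of_le h1 with he | hl
  · exact ⟨n, he⟩
  · exfalso
    rcases blockcases hp n with ⟨_, _, h3, h4⟩ | ⟨_, _, h3, h4⟩ | ⟨_, _, h4⟩
    · have : j = Bk p n + 1 := by omega
      rw [this] at hj; exact hj h3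
    · have : j = Bk p n + 1 := by omega
      rw [this] at hj; exact hj h3
    · omega

lemma N2 (j : ℕ) (hj : p j = 2) : p (j+1) = 1 := by
  obtain ⟨n, h1, h2⟩ := cover hp j
  rcases eq_or_lt_of_le h1 with he | hl
  · -- he : Bk p n = j
    rcases blockcases hp n with ⟨_, h3, _, _⟩ | ⟨_, h3, h4, _⟩ | ⟨_, h3, _⟩
    · rw [he] at h3; omega
    · rw [he] at h4; exact h4
    · rw [he] at h3; omega
  · rcases blockcases hp n with ⟨_, _, h3, h4⟩ | ⟨_, _, h3, h4⟩ | ⟨_, _, h4⟩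
    · have he2 : j = Bk p n + 1 := by omega
      rw [he2] at hj; omega
    · have he2 : j = Bk p n + 1 := by omega
      rw [he2] at hj; omega
    · omega

lemma NN (j : ℕ) : p j ≠ p (j+1) := by
  have h3 := hp.1 j
  intro heq
  interval_cases hv : p j
  · -- p j = 0 : j is a start
    obtain ⟨n, hn⟩ := exists_start hp j (by omega)
    rcases blockcases hp n with ⟨_, _, h4, _⟩ | ⟨_, h4, _, _⟩ | ⟨e, _, h5⟩
    · rw [hn] at h4; omega
    · rw [hn] at h4; omega
    · -- p n = 2, so p (n+1) = 1, so block n+1 starts with 2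
      have hn1 : p (n+1) = 1 := N2 hp n e
      rcases blockcases hp (n+1) with ⟨e2, _, _, _⟩ | ⟨_, h6, _, _⟩ | ⟨e2, _, _⟩
      · omega
      · rw [h5, hn] at h6; omega
      · omega
  · -- p j = 1: j+1 is a start
    obtain ⟨n, h1, h2⟩ := cover hp j
    rcases eq_or_lt_of_le h1 with he | hl
    · exact start_letter hp n (by rw [he]; omega)
    · rcases blockcases hp n with ⟨_, _, _, h4⟩ | ⟨_, _, _, h4⟩ | ⟨_, _, h4⟩
      · have : j + 1 = Bk p (n+1) := by omega
        exact start_letter hp (n+1) (by rw [← this]; omega)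
      · have : j + 1 = Bk p (n+1) := by omega
        exact start_letter hp (n+1) (by rw [← this]; omega)
      · omega
  · have := N2 hp j (by omega)
    omega

lemma inv2 (n s : ℕ) (hn : Bk p n = s) (hs : p s = 2) : p n = 1 := by
  rcases blockcases hp n with ⟨_, h1, _, _⟩ | ⟨e, _, _, _⟩ | ⟨_, h1, _⟩ <;> rw [hn] at * <;> omega

lemma inv_ne1 (n s : ℕ) (hn : Bk p n = s) (hs : p s = 0) : p n ≠ 1 := by
  rcases blockcases hp n with ⟨e, _, _, _⟩ | ⟨_, h1, _, _⟩ | ⟨e, _, _⟩ <;> rw [hn] at * <;> omega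

lemma inv01 (n s : ℕ) (hn : Bk p n = s) (hs : p s = 0) (hs1 : p (s+1) = 1) : p n = 0 := by
  rcases blockcases hp n with ⟨e, _, _, _⟩ | ⟨_, h1, _, _⟩ | ⟨e, _, h4⟩
  · exact e
  · rw [hn] at h1; omega
  · exfalso
    have : Bk p (n+1) = s + 1 := by rw [hn] at h4; omega
    exact start_letter hp (n+1) (by rw [this]; omega)

lemma inv02 (n s : ℕ) (hn : Bk p n = s) (hs : p s = 0) (hs1 : p (s+1) ≠ 1) : p n = 2 := by
  rcases blockcases hp n with ⟨_, _, h3, _⟩ | ⟨_, h1, _, _⟩ | ⟨e, _, _⟩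
  · rw [hn] at h3; omega
  · rw [hn] at h1; omega
  · exact e

lemma nextstart1 (n s : ℕ) (hn : Bk p n = s) (hs1 : p (s+1) = 1) : Bk p (n+1) = s + 2 := by
  rcases blockcases hp n with ⟨_, _, _, h4⟩ | ⟨_, _, _, h4⟩ | ⟨_, _, h4⟩
  · omega
  · omega
  · exfalso
    have : Bk p (n+1) = s + 1 := by omega
    exact start_letter hp (n+1) (by rw [this]; omega)

lemma nextstart2 (n s : ℕ) (hn : Bk p n = s) (hs1 : p (s+1) ≠ 1) : Bk p (n+1) = s + 1 := by
  rcases blockcases hp n with ⟨_, _, h3, _⟩ | ⟨_, _, h3, _⟩ | ⟨_, _, h4⟩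
  · rw [hn] at h3; omega
  · rw [hn] at h3; omega
  · omega

lemma preim_eq (m n n' s : ℕ) (hn : Bk p n = s) (hn' : Bk p n' = s + m)
    (hls : p s = p (s + m)) (hst1 : p (s+1) = 1 ↔ p (s + m + 1) = 1) : p n = p n' := by
  have h3 := hp.1 s
  interval_cases hv : p s
  · -- 0
    by_cases hc : p (s+1) = 1
    · rw [inv01 hp n s hn hv hc, inv01 hp n' (s+m) hn' (by omega) (hst1.mp hc)]
    · rw [inv02 hp n s hn hv hc, inv02 hp n' (s+m) hn' (by omega) (fun hx => hc (hst1.mpr hx))]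
  · exact absurd (hn ▸ rfl : p (Bk p n) = p s) (by rw [hv]; exact fun he => start_letter hp n (by omega))
  · rw [inv2 hp n s hn hv, inv2 hp n' (s+m) hn' (by omega)]


lemma descend_core (i m X : ℕ) (hm : 3 ≤ m) (hX : i + m + 1 ≤ X)
    (hst : ∀ x, i ≤ x → x ≤ X → (p x = 1 ↔ p (x + m) = 1)) :
    ∃ a l s0, 2 ≤ l ∧ l + 1 ≤ m ∧
      Bk p a = s0 ∧ ((s0 = i ∧ p i ≠ 1) ∨ (s0 = i + 1 ∧ p i = 1)) ∧
      Bk p (a + l) = s0 + m ∧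
      (∀ c, Bk p (a + c) ≤ X → Bk p (a + l + c) = Bk p (a + c) + m) := by
  obtain ⟨s0, hs0d, hps0⟩ :
      ∃ s0, ((s0 = i ∧ p i ≠ 1) ∨ (s0 = i + 1 ∧ p i = 1)) ∧ p s0 ≠ 1 := by
    by_cases hpi : p i = 1
    · refine ⟨i+1, Or.inr ⟨rfl, hpi⟩, fun hx => (NN hp i) ?_⟩
      rw [hpi, hx]
    · exact ⟨i, Or.inl ⟨rfl, hpi⟩, hpi⟩
  have hs0i : i ≤ s0 ∧ s0 ≤ i + 1 := by rcases hs0d with ⟨e, _⟩ | ⟨e, _⟩ <;> omega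
  obtain ⟨a, ha⟩ := exists_start hp s0 hps0
  have hpm : p (s0 + m) ≠ 1 := fun hx => hps0 ((hst s0 (by omega) (by omega)).mpr hx)
  obtain ⟨b, hb⟩ := exists_start hp (s0 + m) hpm
  have hab : a < b := by
    have := (Bkmono (p := p)).lt_iff_lt (a := a) (b := b)
    rw [ha, hb] at this
    omega
  have habl : a + (b - a) = b := by omega
  have hl2 : 2 ≤ b - a := by
    have h1 := Bkstep (p := p) a
    have h2 : Bk p (a+1) < Bk p b := by rw [ha] at h1; rw [hb]; omega
    have := (Bkmono (p := p)).lt_iff_lt (a := a+1) (b := b)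
    omega
  have hlm : (b - a) + 1 ≤ m := by
    obtain ⟨x1, hx1a, hx1b, hx1c⟩ :
        ∃ x1, s0 ≤ x1 ∧ x1 + 1 ≤ s0 + m ∧ p x1 = 1 := by
      have h3 := hp.1 s0
      have : p s0 = 0 ∨ p s0 = 2 := by omega
      rcases this with h0 | h2'
      · by_cases hc : p (s0 + 1) = 1
        · exact ⟨s0 + 1, by omega, by omega, hc⟩
        · have hnn := NN hp s0
          have h4 := hp.1 (s0 + 1)
          have : p (s0 + 1) = 2 := by omega
          exact ⟨s0 + 2, by omega, by omega, by have := N2 hp (s0+1) this; convert this using 2 <;> omega⟩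
      · exact ⟨s0 + 1, by omega, by omega, N2 hp s0 h2'⟩
    obtain ⟨nx, hnx1, hnx2⟩ := cover hp x1
    have hax : a ≤ nx := by
      by_contra hcon
      have : nx + 1 ≤ a := by omega
      have := (Bkmono (p := p)).monotone this
      rw [ha] at this
      omega
    have hxb : nx < b := by
      have : Bk p nx < Bk p b := by rw [hb]; omega
      have h5 := (Bkmono (p := p)).lt_iff_lt (a := nx) (b := b)
      omega
    have hne : Bk p nx ≠ x1 := by
      intro he
      exact start_letter hp nx (by rw [he, hx1c])
    have hblk : Bk p (nx + 1) = Bk p nx + 2 := by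
      rcases blockcases hp nx with ⟨_, _, _, h4⟩ | ⟨_, _, _, h4⟩ | ⟨_, _, h4⟩ <;> omega
    have m1 := Bkadd (p := p) a (nx - a)
    have m2 := Bkadd (p := p) (nx + 1) (b - (nx + 1))
    rw [show a + (nx - a) = nx from by omega] at m1
    rw [show nx + 1 + (b - (nx + 1)) = b from by omega] at m2
    rw [ha] at m1
    rw [hb] at m2
    omega
  refine ⟨a, b - a, s0, hl2, hlm, ha, hs0d, by rw [habl, hb], ?_⟩
  intro c
  induction c with
  | zero =>
    intro _
    rw [show a + (b - a) + 0 = b from by omega, show a + 0 = a from rfl, hb, ha]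
  | succ c ih =>
    intro hc
    have hlt : Bk p (a + c) < Bk p (a + (c+1)) := by
      have := Bklt (p := p) (a + c)
      rw [show a + c + 1 = a + (c+1) from rfl] at this
      exact this
    have hQ := ih (by omega)
    set s := Bk p (a + c) with hs
    have his : i ≤ s := by
      have := (Bkmono (p := p)).monotone (Nat.le_add_right a c)
      rw [ha] at this
      omega
    by_cases hv : p (s + 1) = 1
    · have h1 : Bk p (a + c + 1) = s + 2 := nextstart1 hp (a + c) s rfl hv
      have hsx : s + 1 ≤ X := by
        rw [show a + c + 1 = a + (c+1) from rfl] at h1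
        omega
      have hv' : p (s + m + 1) = 1 := by
        have := (hst (s+1) (by omega) hsx).mp hv
        rw [show s + 1 + m = s + m + 1 from by omega] at this
        exact this
      have h2 : Bk p (a + (b-a) + c + 1) = s + m + 2 :=
        nextstart1 hp (a + (b-a) + c) (s + m) hQ hv'
      rw [show a + (b-a) + (c+1) = a + (b-a) + c + 1 from rfl,
          show a + (c+1) = a + c + 1 from rfl, h1, h2]
      omega
    · have h1 : Bk p (a + c + 1) = s + 1 := nextstart2 hp (a + c) s rfl hv
      have hsx : s + 1 ≤ X := by
        rw [show a + c + 1 = a + (c+1) from rfl] at h1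
        omega
      have hv' : p (s + m + 1) ≠ 1 := by
        intro hcon
        apply hv
        have := (hst (s+1) (by omega) hsx).mpr
        rw [show s + 1 + m = s + m + 1 from by omega] at this
        exact this hcon
      have h2 : Bk p (a + (b-a) + c + 1) = s + m + 1 :=
        nextstart2 hp (a + (b-a) + c) (s + m) hQ hv'
      rw [show a + (b-a) + (c+1) = a + (b-a) + c + 1 from rfl,
          show a + (c+1) = a + c + 1 from rfl, h1, h2]
      omega

lemma lastb1 (a l s0 i m w : ℕ) (hw : w + 1 = i + m)
    (ha : Bk p a = s0) (hs0 : (s0 = i ∧ p i ≠ 1) ∨ (s0 = i + 1 ∧ p i = 1))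
    (hb : Bk p (a + l) = s0 + m)
    (hu : p w ≠ 1) (hpim : p i = p (i + m)) :
    ∃ n', n' + 1 = a + l ∧ Bk p n' = w := by
  obtain ⟨n', hn'⟩ := exists_start hp w hu
  rcases hs0 with ⟨e, hne⟩ | ⟨e, he1⟩
  · have h1 : p (w + 1) ≠ 1 := by rw [hw, ← hpim]; exact hne
    have h2 : Bk p (n' + 1) = w + 1 := nextstart2 hp n' w hn' h1
    have h3 : Bk p (n' + 1) = Bk p (a + l) := by rw [h2, hb, e]; omega
    exact ⟨n', (Bkmono (p := p)).injective h3, hn'⟩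
  · have h1 : p (w + 1) = 1 := by rw [hw, ← hpim]; exact he1
    have h2 : Bk p (n' + 1) = w + 2 := nextstart1 hp n' w hn' h1
    have h3 : Bk p (n' + 1) = Bk p (a + l) := by rw [h2, hb, e]; omega
    exact ⟨n', (Bkmono (p := p)).injective h3, hn'⟩

lemma lastb2 (a l s0 i m w : ℕ) (hw : w + 2 = i + m)
    (ha : Bk p a = s0) (hs0 : (s0 = i ∧ p i ≠ 1) ∨ (s0 = i + 1 ∧ p i = 1))
    (hb : Bk p (a + l) = s0 + m)
    (hu2 : p w ≠ 1) (hu1 : p (w + 1) = 1) (hpim : p i = p (i + m)) :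
    ∃ n', n' + 1 = a + l ∧ Bk p n' = w ∧ s0 = i := by
  obtain ⟨n', hn'⟩ := exists_start hp w hu2
  have h2 : Bk p (n' + 1) = w + 2 := nextstart1 hp n' w hn' hu1
  rcases hs0 with ⟨e, hne⟩ | ⟨e, he1⟩
  · have h3 : Bk p (n' + 1) = Bk p (a + l) := by rw [h2, hb, e]; omega
    exact ⟨n', (Bkmono (p := p)).injective h3, hn', e⟩
  · exfalso
    have h4 : p (Bk p (n' + 1)) ≠ 1 := start_letter hp (n' + 1)
    rw [h2, hw, ← hpim] at h4
    exact h4 he1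


end

def Inst (p : ℕ → ℕ) (i m : ℕ) : Prop :=
  Per p i m (2*m) ∨
  (Per p i m (2*m-1) ∧ p (i + (2*m-1)) ≠ 1 ∧ p (i + (3*m-1)) ≠ 1) ∨
  (Per p i m (2*m-1) ∧ p (i + (2*m-1)) = 1 ∧ p (i + (3*m-1)) ≠ 1) ∨
  (Per p i m (2*m-1) ∧ p (i + (2*m-1)) ≠ 1 ∧ p (i + (3*m-1)) = 1) ∨
  (Per p i m (2*m-2) ∧ p (i + (2*m-2)) = 2 ∧ p (i + (3*m-2)) = 0)

section
variable {p : ℕ → ℕ} (hp : IsFixedPoint p)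
include hp

lemma descD (i M : ℕ)
    (hper : Per p i (M+3) (2*(M+3) - 1))
    (hpa : p (i + (2*M + 5)) ≠ 1) (hpb : p (i + (3*M + 8)) ≠ 1) :
    ∃ a l, 2 ≤ l ∧ l + 1 ≤ M + 3 ∧ Inst p a l := by
  have hle : ∀ x, i ≤ x → x ≤ i + (2*M + 4) → p x = p (x + (M+3)) := by
    intro x h1 h2
    have e : i + (x - i) = x := by omega
    have h3 := hper (x - i) (by omega)
    rw [e] at h3
    exact h3
  have hst : ∀ x, i ≤ x → x ≤ i + (2*M + 5) → (p x = 1 ↔ p (x + (M+3)) = 1) := by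
    intro x h1 h2
    by_cases he : x = i + (2*M + 5)
    · subst he
      rw [show i + (2*M+5) + (M+3) = i + (3*M + 8) from by omega]
      exact iff_of_false hpa hpb
    · rw [hle x h1 (by omega)]
  obtain ⟨a, l, s0, hl2, hlm, ha, hs0, hb, Q⟩ :=
    descend_core hp i (M+3) (i + (2*M+5)) (by omega) (by omega) hst
  have hpim : p i = p (i + (M+3)) := hle i (le_refl i) (by omega)
  have hum1 : p (i + (M+2)) ≠ 1 := by
    have h1 := hle (i + (M+2)) (by omega) (by omega)
    rw [show i + (M+2) + (M+3) = i + (2*M+5) from by omega] at h1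
    rw [h1]
    exact hpa
  obtain ⟨n', hn'1, hn'2⟩ :=
    lastb1 hp a l s0 i (M+3) (i + (M+2)) (by omega) ha hs0 hb hum1 hpim
  have hc1 : a + (l - 1) = n' := by omega
  have hQ1 := Q (l - 1) (by rw [hc1, hn'2]; omega)
  rw [hc1, hn'2] at hQ1
  have hQ1' : Bk p (a + (2*l - 1)) = i + (2*M + 5) := by
    rw [show a + (2*l-1) = a + l + (l-1) from by omega, hQ1]
    omega
  have hQ2 := Q (2*l - 1) (le_of_eq hQ1')
  rw [hQ1'] at hQ2
  have hQ2' : Bk p (a + (3*l - 1)) = i + (3*M + 8) := by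
    rw [show a + (3*l-1) = a + l + (2*l-1) from by omega, hQ2]
    omega
  have his0 : i ≤ s0 := by rcases hs0 with ⟨e, _⟩ | ⟨e, _⟩ <;> omega
  have hPer : ∀ k, k < 2*l - 1 → p (a + k) = p (a + k + l) := by
    intro k hk
    have hsl : Bk p (a + k) < Bk p (a + (2*l - 1)) :=
      Bkmono (by omega)
    rw [hQ1'] at hsl
    have his : i ≤ Bk p (a + k) := by
      have := (Bkmono (p := p)).monotone (Nat.le_add_right a k)
      rw [ha] at this
      omega
    have hQk := Q k (by omega)
    rw [show a + k + l = a + l + k from by omega]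
    refine preim_eq hp (M+3) (a+k) (a + l + k) (Bk p (a+k)) rfl hQk
      (hle (Bk p (a+k)) his (by omega)) ?_
    have h4 := hst (Bk p (a+k) + 1) (by omega) (by omega)
    rw [show Bk p (a+k) + 1 + (M+3) = Bk p (a+k) + (M+3) + 1 from by omega] at h4
    exact h4
  have hvals := hp.1 (i + (2*M+5))
  have hvals2 := hp.1 (i + (3*M+8))
  have hA : p (i + (2*M+5)) = 0 ∨ p (i + (2*M+5)) = 2 := by omega
  have hB : p (i + (3*M+8)) = 0 ∨ p (i + (3*M+8)) = 2 := by omega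
  refine ⟨a, l, hl2, hlm, ?_⟩
  rcases hA with hA0 | hA2 <;> rcases hB with hB0 | hB2
  · -- (0,0) : ClsD
    refine Or.inr (Or.inl ⟨?_, ?_, ?_⟩)
    · intro k hk; exact hPer k (by omega)
    · exact inv_ne1 hp (a + (2*l-1)) (i + (2*M+5)) hQ1' hA0
    · exact inv_ne1 hp (a + (3*l-1)) (i + (3*M+8)) hQ2' hB0
  · -- (0,2) : ClsE'
    refine Or.inr (Or.inr (Or.inr (Or.inl ⟨?_, ?_, ?_⟩)))
    · intro k hk; exact hPer k (by omega)
    · exact inv_ne1 hp (a + (2*l-1)) (i + (2*M+5)) hQ1' hA0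
    · exact inv2 hp (a + (3*l-1)) (i + (3*M+8)) hQ2' hB2
  · -- (2,0) : ClsE
    refine Or.inr (Or.inr (Or.inl ⟨?_, ?_, ?_⟩))
    · intro k hk; exact hPer k (by omega)
    · exact inv2 hp (a + (2*l-1)) (i + (2*M+5)) hQ1' hA2
    · exact inv_ne1 hp (a + (3*l-1)) (i + (3*M+8)) hQ2' hB0
  · -- (2,2) : ClsC
    refine Or.inl ?_
    intro k hk
    by_cases hk2 : k < 2*l - 1
    · exact hPer k hk2
    · have : k = 2*l - 1 := by omega
      subst this
      rw [show a + (2*l-1) + l = a + (3*l-1) from by omega]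
      rw [inv2 hp (a + (2*l-1)) (i + (2*M+5)) hQ1' hA2,
          inv2 hp (a + (3*l-1)) (i + (3*M+8)) hQ2' hB2]

lemma descC (i M : ℕ)
    (hper : Per p i (M+3) (2*(M+3))) :
    ∃ a l, 2 ≤ l ∧ l + 1 ≤ M + 3 ∧ Inst p a l := by
  have hle : ∀ x, i ≤ x → x ≤ i + (2*M + 5) → p x = p (x + (M+3)) := by
    intro x h1 h2
    have e : i + (x - i) = x := by omega
    have h3 := hper (x - i) (by omega)
    rw [e] at h3
    exact h3
  have hst : ∀ x, i ≤ x → x ≤ i + (2*M + 5) → (p x = 1 ↔ p (x + (M+3)) = 1) := by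
    intro x h1 h2
    rw [hle x h1 h2]
  obtain ⟨a, l, s0, hl2, hlm, ha, hs0, hb, Q⟩ :=
    descend_core hp i (M+3) (i + (2*M+5)) (by omega) (by omega) hst
  have hpim : p i = p (i + (M+3)) := hle i (le_refl i) (by omega)
  have his0 : i ≤ s0 := by rcases hs0 with ⟨e, _⟩ | ⟨e, _⟩ <;> omega
  by_cases hu : p (i + (M+2)) = 1
  · -- last letter of period is 1 : get full cube upstairs
    have hbnd : Bk p (a + (l - 1)) ≤ i + (M + 1) := by
      have h1 : Bk p (a + (l-1)) < Bk p (a + l) := Bkmono (by omega)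
      rw [hb] at h1
      have h2 : Bk p (a + (l-1)) ≠ i + (M+2) := by
        intro he
        exact start_letter hp (a + (l-1)) (by rw [he]; exact hu)
      rcases hs0 with ⟨e, hne⟩ | ⟨e, he1⟩
      · omega
      · have h3 : Bk p (a + (l-1)) ≠ i + (M+3) := by
          intro he
          apply start_letter hp (a + (l-1))
          rw [he, ← hpim]
          exact he1
        omega
    have hQ1 := Q (l - 1) (by omega)
    have hQ1' : Bk p (a + (2*l - 1)) ≤ i + (2*M + 4) := by
      rw [show a + (2*l-1) = a + l + (l-1) from by omega, hQ1]
      omega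
    refine ⟨a, l, hl2, hlm, Or.inl ?_⟩
    intro k hk
    have hsl : Bk p (a + k) ≤ Bk p (a + (2*l - 1)) :=
      (Bkmono (p := p)).monotone (by omega)
    have his : i ≤ Bk p (a + k) := by
      have := (Bkmono (p := p)).monotone (Nat.le_add_right a k)
      rw [ha] at this
      omega
    have hQk := Q k (by omega)
    rw [show a + k + l = a + l + k from by omega]
    refine preim_eq hp (M+3) (a+k) (a + l + k) (Bk p (a+k)) rfl hQk
      (hle (Bk p (a+k)) his (by omega)) ?_
    have h4 := hst (Bk p (a+k) + 1) (by omega) (by omega)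
    rw [show Bk p (a+k) + 1 + (M+3) = Bk p (a+k) + (M+3) + 1 from by omega] at h4
    exact h4
  · -- last letter of period is not 1
    obtain ⟨n', hn'1, hn'2⟩ :=
      lastb1 hp a l s0 i (M+3) (i + (M+2)) (by omega) ha hs0 hb hu hpim
    have hc1 : a + (l - 1) = n' := by omega
    have hQ1 := Q (l - 1) (by rw [hc1, hn'2]; omega)
    rw [hc1, hn'2] at hQ1
    have hQ1' : Bk p (a + (2*l - 1)) = i + (2*M + 5) := by
      rw [show a + (2*l-1) = a + l + (l-1) from by omega, hQ1]
      omega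
    have hQ2 := Q (2*l - 1) (le_of_eq hQ1')
    rw [hQ1'] at hQ2
    have hQ2' : Bk p (a + (3*l - 1)) = i + (3*M + 8) := by
      rw [show a + (3*l-1) = a + l + (2*l-1) from by omega, hQ2]
      omega
    have hPer : ∀ k, k < 2*l - 1 → p (a + k) = p (a + k + l) := by
      intro k hk
      have hsl : Bk p (a + k) < Bk p (a + (2*l - 1)) :=
        Bkmono (by omega)
      rw [hQ1'] at hsl
      have his : i ≤ Bk p (a + k) := by
        have := (Bkmono (p := p)).monotone (Nat.le_add_right a k)
        rw [ha] at this
        omega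
      have hQk := Q k (by omega)
      rw [show a + k + l = a + l + k from by omega]
      refine preim_eq hp (M+3) (a+k) (a + l + k) (Bk p (a+k)) rfl hQk
        (hle (Bk p (a+k)) his (by omega)) ?_
      have h4 := hst (Bk p (a+k) + 1) (by omega) (by omega)
      rw [show Bk p (a+k) + 1 + (M+3) = Bk p (a+k) + (M+3) + 1 from by omega] at h4
      exact h4
    have hA : p (i + (2*M+5)) = p (i + (M+2)) := by
      have h1 := hle (i + (M+2)) (by omega) (by omega)
      rw [show i + (M+2) + (M+3) = i + (2*M+5) from by omega] at h1
      exact h1.symm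
    have hBv : p (i + (3*M+8)) = p (i + (2*M+5)) := by
      have h1 := hle (i + (2*M+5)) (by omega) (by omega)
      rw [show i + (2*M+5) + (M+3) = i + (3*M+8) from by omega] at h1
      exact h1.symm
    have hvals := hp.1 (i + (M+2))
    have huv : p (i + (M+2)) = 0 ∨ p (i + (M+2)) = 2 := by omega
    refine ⟨a, l, hl2, hlm, ?_⟩
    rcases huv with hu0 | hu2
    · -- letter 0 : ClsD
      refine Or.inr (Or.inl ⟨?_, ?_, ?_⟩)
      · intro k hk; exact hPer k (by omega)
      · exact inv_ne1 hp (a + (2*l-1)) (i + (2*M+5)) hQ1' (by rw [hA, hu0])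
      · exact inv_ne1 hp (a + (3*l-1)) (i + (3*M+8)) hQ2' (by rw [hBv, hA, hu0])
    · -- letter 2 : ClsC
      refine Or.inl ?_
      intro k hk
      by_cases hk2 : k < 2*l - 1
      · exact hPer k hk2
      · have : k = 2*l - 1 := by omega
        subst this
        rw [show a + (2*l-1) + l = a + (3*l-1) from by omega]
        rw [inv2 hp (a + (2*l-1)) (i + (2*M+5)) hQ1' (by rw [hA, hu2]),
            inv2 hp (a + (3*l-1)) (i + (3*M+8)) hQ2' (by rw [hBv, hA, hu2])]

lemma descE (i M : ℕ)
    (hper : Per p i (M+3) (2*(M+3) - 1))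
    (hpa : p (i + (2*M + 5)) = 1) (hpb : p (i + (3*M + 8)) ≠ 1) :
    ∃ a l, 2 ≤ l ∧ l + 1 ≤ M + 3 ∧ Inst p a l := by
  have hle : ∀ x, i ≤ x → x ≤ i + (2*M + 4) → p x = p (x + (M+3)) := by
    intro x h1 h2
    have e : i + (x - i) = x := by omega
    have h3 := hper (x - i) (by omega)
    rw [e] at h3
    exact h3
  have hst : ∀ x, i ≤ x → x ≤ i + (2*M + 4) → (p x = 1 ↔ p (x + (M+3)) = 1) := by
    intro x h1 h2
    rw [hle x h1 h2]
  obtain ⟨a, l, s0, hl2, hlm, ha, hs0, hb, Q⟩ :=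
    descend_core hp i (M+3) (i + (2*M+4)) (by omega) (by omega) hst
  have hpim : p i = p (i + (M+3)) := hle i (le_refl i) (by omega)
  have his0 : i ≤ s0 := by rcases hs0 with ⟨e, _⟩ | ⟨e, _⟩ <;> omega
  have hum1 : p (i + (M+2)) = 1 := by
    have h1 := hle (i + (M+2)) (by omega) (by omega)
    rw [show i + (M+2) + (M+3) = i + (2*M+5) from by omega] at h1
    rw [h1]
    exact hpa
  have hum2ne : p (i + (M+1)) ≠ 1 := by
    have := NN hp (i + (M+1))
    rw [show i + (M+1) + 1 = i + (M+2) from by omega, hum1] at this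
    exact this
  have h2m4 : p (i + (2*M+4)) = p (i + (M+1)) := by
    have h1 := hle (i + (M+1)) (by omega) (by omega)
    rw [show i + (M+1) + (M+3) = i + (2*M+4) from by omega] at h1
    exact h1.symm
  have h3m7 : p (i + (3*M+7)) = p (i + (M+1)) := by
    have h1 := hle (i + (2*M+4)) (by omega) (by omega)
    rw [show i + (2*M+4) + (M+3) = i + (3*M+7) from by omega] at h1
    rw [← h1]
    exact h2m4
  have hum2 : p (i + (M+1)) = 0 := by
    have hv := hp.1 (i + (M+1))
    have hne2 : p (i + (M+1)) ≠ 2 := by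
      intro he
      apply hpb
      have := N2 hp (i + (3*M+7)) (by rw [h3m7, he])
      rw [show i + (3*M+7) + 1 = i + (3*M+8) from by omega] at this
      exact this
    omega
  have hb2 : p (i + (3*M+8)) = 2 := by
    have hv := hp.1 (i + (3*M+8))
    have hne0 : p (i + (3*M+8)) ≠ 0 := by
      intro he
      apply NN hp (i + (3*M+7))
      rw [show i + (3*M+7) + 1 = i + (3*M+8) from by omega, he, h3m7, hum2]
    omega
  obtain ⟨n', hn'1, hn'2, hs0i⟩ :=
    lastb2 hp a l s0 i (M+3) (i + (M+1)) (by omega) ha hs0 hb hum2ne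
      (by rw [show i + (M+1) + 1 = i + (M+2) from by omega]; exact hum1) hpim
  have hc1 : a + (l - 1) = n' := by omega
  have hQ1 := Q (l - 1) (by rw [hc1, hn'2]; omega)
  rw [hc1, hn'2] at hQ1
  have hQ1' : Bk p (a + (2*l - 1)) = i + (2*M + 4) := by
    rw [show a + (2*l-1) = a + l + (l-1) from by omega, hQ1]
    omega
  have hQ2 := Q (2*l - 1) (le_of_eq hQ1')
  rw [hQ1'] at hQ2
  have hQ2' : Bk p (a + (3*l - 1)) = i + (3*M + 7) := by
    rw [show a + (3*l-1) = a + l + (2*l-1) from by omega, hQ2]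
    omega
  have hPer : ∀ k, k < 2*l - 1 → p (a + k) = p (a + k + l) := by
    intro k hk
    have hsl : Bk p (a + k) < Bk p (a + (2*l - 1)) :=
      Bkmono (by omega)
    rw [hQ1'] at hsl
    have his : i ≤ Bk p (a + k) := by
      have := (Bkmono (p := p)).monotone (Nat.le_add_right a k)
      rw [ha] at this
      omega
    have hQk := Q k (by omega)
    rw [show a + k + l = a + l + k from by omega]
    refine preim_eq hp (M+3) (a+k) (a + l + k) (Bk p (a+k)) rfl hQk
      (hle (Bk p (a+k)) his (by omega)) ?_
    have h4 := hst (Bk p (a+k) + 1) (by omega) (by omega)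
    rw [show Bk p (a+k) + 1 + (M+3) = Bk p (a+k) + (M+3) + 1 from by omega] at h4
    exact h4
  refine ⟨a, l, hl2, hlm, Or.inr (Or.inl ⟨?_, ?_, ?_⟩)⟩
  · intro k hk; exact hPer k (by omega)
  · rw [inv01 hp (a + (2*l-1)) (i + (2*M+4)) hQ1' (by rw [h2m4, hum2])
      (by rw [show i + (2*M+4) + 1 = i + (2*M+5) from by omega]; exact hpa)]
    omega
  · rw [inv02 hp (a + (3*l-1)) (i + (3*M+7)) hQ2' (by rw [h3m7, hum2])
      (by rw [show i + (3*M+7) + 1 = i + (3*M+8) from by omega, hb2]; omega)]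
    omega

lemma descEp (i M : ℕ)
    (hper : Per p i (M+3) (2*(M+3) - 1))
    (hpa : p (i + (2*M + 5)) ≠ 1) (hpb : p (i + (3*M + 8)) = 1) :
    ∃ a l, 2 ≤ l ∧ l + 1 ≤ M + 3 ∧ Inst p a l := by
  have hle : ∀ x, i ≤ x → x ≤ i + (2*M + 4) → p x = p (x + (M+3)) := by
    intro x h1 h2
    have e : i + (x - i) = x := by omega
    have h3 := hper (x - i) (by omega)
    rw [e] at h3
    exact h3
  have hst : ∀ x, i ≤ x → x ≤ i + (2*M + 4) → (p x = 1 ↔ p (x + (M+3)) = 1) := by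
    intro x h1 h2
    rw [hle x h1 h2]
  obtain ⟨a, l, s0, hl2, hlm, ha, hs0, hb, Q⟩ :=
    descend_core hp i (M+3) (i + (2*M+4)) (by omega) (by omega) hst
  have hpim : p i = p (i + (M+3)) := hle i (le_refl i) (by omega)
  have his0 : i ≤ s0 := by rcases hs0 with ⟨e, _⟩ | ⟨e, _⟩ <;> omega
  have hum1 : p (i + (M+2)) ≠ 1 := by
    have h1 := hle (i + (M+2)) (by omega) (by omega)
    rw [show i + (M+2) + (M+3) = i + (2*M+5) from by omega] at h1
    rw [h1]
    exact hpa
  have h2m4 : p (i + (2*M+4)) = p (i + (M+1)) := by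
    have h1 := hle (i + (M+1)) (by omega) (by omega)
    rw [show i + (M+1) + (M+3) = i + (2*M+4) from by omega] at h1
    exact h1.symm
  have h3m7 : p (i + (3*M+7)) = p (i + (M+1)) := by
    have h1 := hle (i + (2*M+4)) (by omega) (by omega)
    rw [show i + (2*M+4) + (M+3) = i + (3*M+7) from by omega] at h1
    rw [← h1]
    exact h2m4
  have hum2 : p (i + (M+1)) = 0 := by
    have hv := hp.1 (i + (M+1))
    have hne2 : p (i + (M+1)) ≠ 2 := by
      intro he
      apply hpa
      have := N2 hp (i + (2*M+4)) (by rw [h2m4, he])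
      rw [show i + (2*M+4) + 1 = i + (2*M+5) from by omega] at this
      exact this
    have hne1 : p (i + (M+1)) ≠ 1 := by
      intro he
      apply NN hp (i + (3*M+7))
      rw [show i + (3*M+7) + 1 = i + (3*M+8) from by omega, hpb, h3m7, he]
    omega
  obtain ⟨n', hn'1, hn'2⟩ :=
    lastb1 hp a l s0 i (M+3) (i + (M+2)) (by omega) ha hs0 hb hum1 hpim
  obtain ⟨n'', hn''⟩ := exists_start hp (i + (M+1)) (by rw [hum2]; omega)
  have hnn : Bk p (n'' + 1) = i + (M+2) :=  by
    have := nextstart2 hp n'' (i + (M+1)) hn''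
      (by rw [show i + (M+1) + 1 = i + (M+2) from by omega]; exact hum1)
    rw [this]
    omega
  have hn''e : n'' + 1 = n' := (Bkmono (p := p)).injective (by rw [hnn, hn'2])
  have hc1 : a + (l - 2) = n'' := by omega
  have hQ1 := Q (l - 2) (by rw [hc1, hn'']; omega)
  rw [hc1, hn''] at hQ1
  have hQ1' : Bk p (a + (2*l - 2)) = i + (2*M + 4) := by
    rw [show a + (2*l-2) = a + l + (l-2) from by omega, hQ1]
    omega
  have hQ2 := Q (2*l - 2) (le_of_eq hQ1')
  rw [hQ1'] at hQ2
  have hQ2' : Bk p (a + (3*l - 2)) = i + (3*M + 7) := by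
    rw [show a + (3*l-2) = a + l + (2*l-2) from by omega, hQ2]
    omega
  have hPer : ∀ k, k < 2*l - 2 → p (a + k) = p (a + k + l) := by
    intro k hk
    have hsl : Bk p (a + k) < Bk p (a + (2*l - 2)) :=
      Bkmono (by omega)
    rw [hQ1'] at hsl
    have his : i ≤ Bk p (a + k) := by
      have := (Bkmono (p := p)).monotone (Nat.le_add_right a k)
      rw [ha] at this
      omega
    have hQk := Q k (by omega)
    rw [show a + k + l = a + l + k from by omega]
    refine preim_eq hp (M+3) (a+k) (a + l + k) (Bk p (a+k)) rfl hQk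
      (hle (Bk p (a+k)) his (by omega)) ?_
    have h4 := hst (Bk p (a+k) + 1) (by omega) (by omega)
    rw [show Bk p (a+k) + 1 + (M+3) = Bk p (a+k) + (M+3) + 1 from by omega] at h4
    exact h4
  refine ⟨a, l, hl2, hlm, Or.inr (Or.inr (Or.inr (Or.inr ⟨?_, ?_, ?_⟩)))⟩
  · intro k hk; exact hPer k (by omega)
  · exact inv02 hp (a + (2*l-2)) (i + (2*M+4)) hQ1' (by rw [h2m4, hum2])
      (by rw [show i + (2*M+4) + 1 = i + (2*M+5) from by omega]; exact hpa)
  · exact inv01 hp (a + (3*l-2)) (i + (3*M+7)) hQ2' (by rw [h3m7, hum2])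
      (by rw [show i + (3*M+7) + 1 = i + (3*M+8) from by omega]; exact hpb)

lemma descF (i M : ℕ)
    (hper : Per p i (M+3) (2*(M+3) - 2))
    (hpa : p (i + (2*M + 4)) = 2) (hpb : p (i + (3*M + 7)) = 0) :
    ∃ a l, 2 ≤ l ∧ l + 1 ≤ M + 3 ∧ Inst p a l := by
  have hle : ∀ x, i ≤ x → x ≤ i + (2*M + 3) → p x = p (x + (M+3)) := by
    intro x h1 h2
    have e : i + (x - i) = x := by omega
    have h3 := hper (x - i) (by omega)
    rw [e] at h3
    exact h3
  have hst : ∀ x, i ≤ x → x ≤ i + (2*M + 4) → (p x = 1 ↔ p (x + (M+3)) = 1) := by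
    intro x h1 h2
    by_cases he : x = i + (2*M + 4)
    · subst he
      rw [show i + (2*M+4) + (M+3) = i + (3*M + 7) from by omega]
      exact iff_of_false (by rw [hpa]; omega) (by rw [hpb]; omega)
    · rw [hle x h1 (by omega)]
  obtain ⟨a, l, s0, hl2, hlm, ha, hs0, hb, Q⟩ :=
    descend_core hp i (M+3) (i + (2*M+4)) (by omega) (by omega) hst
  have hpim : p i = p (i + (M+3)) := hle i (le_refl i) (by omega)
  have his0 : i ≤ s0 := by rcases hs0 with ⟨e, _⟩ | ⟨e, _⟩ <;> omega
  have hum2 : p (i + (M+1)) = 2 := by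
    have h1 := hle (i + (M+1)) (by omega) (by omega)
    rw [show i + (M+1) + (M+3) = i + (2*M+4) from by omega] at h1
    rw [h1]
    exact hpa
  have hum1 : p (i + (M+2)) = 1 := by
    have := N2 hp (i + (M+1)) hum2
    rw [show i + (M+1) + 1 = i + (M+2) from by omega] at this
    exact this
  obtain ⟨n', hn'1, hn'2, hs0i⟩ :=
    lastb2 hp a l s0 i (M+3) (i + (M+1)) (by omega) ha hs0 hb (by rw [hum2]; omega)
      (by rw [show i + (M+1) + 1 = i + (M+2) from by omega]; exact hum1) hpim
  have hc1 : a + (l - 1) = n' := by omega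
  have hQ1 := Q (l - 1) (by rw [hc1, hn'2]; omega)
  rw [hc1, hn'2] at hQ1
  have hQ1' : Bk p (a + (2*l - 1)) = i + (2*M + 4) := by
    rw [show a + (2*l-1) = a + l + (l-1) from by omega, hQ1]
    omega
  have hQ2 := Q (2*l - 1) (le_of_eq hQ1')
  rw [hQ1'] at hQ2
  have hQ2' : Bk p (a + (3*l - 1)) = i + (3*M + 7) := by
    rw [show a + (3*l-1) = a + l + (2*l-1) from by omega, hQ2]
    omega
  have hPer : ∀ k, k < 2*l - 1 → p (a + k) = p (a + k + l) := by
    intro k hk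
    have hsl : Bk p (a + k) < Bk p (a + (2*l - 1)) :=
      Bkmono (by omega)
    rw [hQ1'] at hsl
    have his : i ≤ Bk p (a + k) := by
      have := (Bkmono (p := p)).monotone (Nat.le_add_right a k)
      rw [ha] at this
      omega
    have hQk := Q k (by omega)
    rw [show a + k + l = a + l + k from by omega]
    refine preim_eq hp (M+3) (a+k) (a + l + k) (Bk p (a+k)) rfl hQk
      (hle (Bk p (a+k)) his (by omega)) ?_
    have h4 := hst (Bk p (a+k) + 1) (by omega) (by omega)
    rw [show Bk p (a+k) + 1 + (M+3) = Bk p (a+k) + (M+3) + 1 from by omega] at h4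
    exact h4
  refine ⟨a, l, hl2, hlm, Or.inr (Or.inr (Or.inl ⟨?_, ?_, ?_⟩))⟩
  · intro k hk; exact hPer k (by omega)
  · exact inv2 hp (a + (2*l-1)) (i + (2*M+4)) hQ1' hpa
  · exact inv_ne1 hp (a + (3*l-1)) (i + (3*M+7)) hQ2' hpb

lemma base5 (i : ℕ) (e1 : p i = p (i+2)) (e2 : p (i+1) = p (i+3)) (e3 : p (i+2) = p (i+4)) :
    False := by
  have hNN := NN hp i
  have hx3 := hp.1 i
  have hy3 := hp.1 (i+1)
  have hx : p i = 0 ∨ p i = 1 ∨ p i = 2 := by omega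
  have hy : p (i+1) = 0 ∨ p (i+1) = 1 ∨ p (i+1) = 2 := by omega
  rcases hx with hx0 | hx1 | hx2
  · rcases hy with hy0 | hy1 | hy2
    · exact hNN (by rw [hx0, hy0])
    · -- 0 1 0 1 0
      obtain ⟨n, hn⟩ := exists_start hp i (by rw [hx0]; omega)
      have hns : Bk p (n+1) = i + 2 := nextstart1 hp n i hn hy1
      have g1 : p n = 0 := inv01 hp n i hn hx0 hy1
      have g2 : p (n+1) = 0 := inv01 hp (n+1) (i+2) hns (by rw [← e1, hx0])
        (by rw [show i + 2 + 1 = i + 3 from by omega, ← e2]; exact hy1)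
      exact NN hp n (by rw [g1, g2])
    · -- 0 2 : N2 forces p (i+2) = 1
      have := N2 hp (i+1) hy2
      rw [show i + 1 + 1 = i + 2 from by omega, ← e1, hx0] at this
      omega
  · rcases hy with hy0 | hy1 | hy2
    · -- 1 0 1 0 1
      obtain ⟨n, hn⟩ := exists_start hp (i+1) (by rw [hy0]; omega)
      have hns : Bk p (n+1) = i + 3 := by
        have := nextstart1 hp n (i+1) hn (by rw [show i+1+1 = i+2 from by omega, ← e1]; exact hx1)
        exact this
      have g1 : p n = 0 := inv01 hp n (i+1) hn hy0
        (by rw [show i+1+1 = i+2 from by omega, ← e1]; exact hx1)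
      have g2 : p (n+1) = 0 := inv01 hp (n+1) (i+3) hns (by rw [← e2, hy0])
        (by rw [show i + 3 + 1 = i + 4 from by omega, ← e3, ← e1]; exact hx1)
      exact NN hp n (by rw [g1, g2])
    · exact hNN (by rw [hx1, hy1])
    · -- 1 2 1 2 1
      obtain ⟨n, hn⟩ := exists_start hp (i+1) (by rw [hy2]; omega)
      have hns : Bk p (n+1) = i + 3 := by
        have := nextstart1 hp n (i+1) hn (by rw [show i+1+1 = i+2 from by omega, ← e1]; exact hx1)
        exact this
      have g1 : p n = 1 := inv2 hp n (i+1) hn hy2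
      have g2 : p (n+1) = 1 := inv2 hp (n+1) (i+3) hns (by rw [← e2]; exact hy2)
      exact NN hp n (by rw [g1, g2])
  · rcases hy with hy0 | hy1 | hy2
    · have := N2 hp i hx2
      omega
    · -- 2 1 2
      obtain ⟨n, hn⟩ := exists_start hp i (by rw [hx2]; omega)
      have hns : Bk p (n+1) = i + 2 := nextstart1 hp n i hn hy1
      have g1 : p n = 1 := inv2 hp n i hn hx2
      have g2 : p (n+1) = 1 := inv2 hp (n+1) (i+2) hns (by rw [← e1]; exact hx2)
      exact NN hp n (by rw [g1, g2])
    · exact hNN (by rw [hx2, hy2])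

lemma baseF (i : ℕ) (hper : Per p i 2 2) (h2 : p (i+2) = 2) : False := by
  have e0 : p i = 2 := by
    have := hper 0 (by omega)
    simpa using this.trans (by rw [show i + 0 + 2 = i + 2 from by omega, h2])
  have h1 : p (i+1) = 1 := N2 hp i e0
  obtain ⟨n, hn⟩ := exists_start hp i (by rw [e0]; omega)
  have hns : Bk p (n+1) = i + 2 := nextstart1 hp n i hn h1
  have g1 : p n = 1 := inv2 hp n i hn e0
  have g2 : p (n+1) = 1 := inv2 hp (n+1) (i+2) hns h2
  exact NN hp n (by rw [g1, g2])

lemma noInst : ∀ m, 2 ≤ m → ∀ i, ¬ Inst p i m := by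
  intro m
  induction m using Nat.strong_induction_on with
  | _ m IH =>
    intro hm i hInst
    by_cases h2 : m = 2
    · subst h2
      have hb5 : Per p i 2 3 → False := by
        intro hP
        have e1 := hP 0 (by omega)
        have e2 := hP 1 (by omega)
        have e3 := hP 2 (by omega)
        simp only [Nat.add_zero] at e1
        exact base5 hp i (by simpa using e1) (by rw [e2]) (by rw [e3])
      rcases hInst with hC | hD | hE | hEp | hF
      · exact hb5 (fun k hk => hC k (by omega))
      · exact hb5 (fun k hk => hD.1 k (by omega))
      · exact hb5 (fun k hk => hE.1 k (by omega))
      · exact hb5 (fun k hk => hEp.1 k (by omega))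
      · exact baseF hp i hF.1 hF.2.1
    · have hm3 : 3 ≤ m := by omega
      obtain ⟨M, rfl⟩ : ∃ M, m = M + 3 := ⟨m - 3, by omega⟩
      have step : ∃ a l, 2 ≤ l ∧ l + 1 ≤ M + 3 ∧ Inst p a l := by
        rcases hInst with hC | ⟨h1, h2, h3⟩ | ⟨h1, h2, h3⟩ | ⟨h1, h2, h3⟩ | ⟨h1, h2, h3⟩
        · exact descC hp i M hC
        · exact descD hp i M h1
            (by rw [show i + (2*M+5) = i + (2*(M+3)-1) from by omega]; exact h2)
            (by rw [show i + (3*M+8) = i + (3*(M+3)-1) from by omega]; exact h3)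
        · exact descE hp i M h1
            (by rw [show i + (2*M+5) = i + (2*(M+3)-1) from by omega]; exact h2)
            (by rw [show i + (3*M+8) = i + (3*(M+3)-1) from by omega]; exact h3)
        · exact descEp hp i M h1
            (by rw [show i + (2*M+5) = i + (2*(M+3)-1) from by omega]; exact h2)
            (by rw [show i + (3*M+8) = i + (3*(M+3)-1) from by omega]; exact h3)
        · exact descF hp i M h1
            (by rw [show i + (2*M+4) = i + (2*(M+3)-2) from by omega]; exact h2)
            (by rw [show i + (3*M+7) = i + (3*(M+3)-2) from by omega]; exact h3)
      obtain ⟨a, l, hl2, hlm, hI⟩ := step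
      exact IH l (by omega) hl2 a hI

end

lemma triple_periodic (x : List ℕ) (k : ℕ) (hk : k < 2 * x.length) :
    (x ++ x ++ x).getD k 0 = (x ++ x ++ x).getD (k + x.length) 0 := by
  by_cases h1 : k < x.length
  · rw [List.getD_append _ _ _ _ (by simp; omega),
        List.getD_append _ _ _ _ h1,
        List.getD_append _ _ _ _ (by simp; omega),
        List.getD_append_right _ _ _ _ (by omega)]
    congr 1
    omega
  · rw [List.getD_append _ _ _ _ (by simp; omega),
        List.getD_append_right _ _ _ _ (by omega),
        List.getD_append_right _ _ _ _ (by simp; omega)]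
    congr 1
    simp
    omega

end S18

theorem stmt18 (p : ℕ → ℕ) (hp : IsFixedPoint p) :
    ¬ ∃ x : List ℕ, x ≠ [] ∧ IsFactor (x ++ x ++ x) p := by
  rintro ⟨x, hx, i, hfac⟩
  have hn1 : 1 ≤ x.length := List.length_pos_iff.mpr hx
  have hL : (x ++ x ++ x).length = 3 * x.length := by
    rw [List.length_append, List.length_append]
    omega
  have key : ∀ j, j < (x ++ x ++ x).length → p (i + j) = (x ++ x ++ x).getD j 0 := by
    intro j hj
    conv_rhs => rw [hfac]
    rw [List.getD_eq_getElem _ _ (by simpa using hj)]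
    rw [List.getElem_map, List.getElem_range]
  have hPer : S18.Per p i x.length (2 * x.length) := by
    intro k hk
    have h1 := key k (by omega)
    have h2 := key (k + x.length) (by omega)
    rw [show i + k + x.length = i + (k + x.length) from by omega]
    rw [h1, h2, S18.triple_periodic x k (by omega)]
  by_cases h1 : x.length = 1
  · have := hPer 0 (by omega)
    simp only [Nat.add_zero] at this
    rw [h1] at this
    exact S18.NN hp i this
  · have h2 : 2 ≤ x.length := by omega
    exact S18.noInst hp x.length h2 i (Or.inl hPer)
end

section
/- The word p contains no factor in the set {00, 11, 22, 20, 212, 0101, 02102, 121012, 01021010, 21021012102}. -/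
/-! ### Auxiliary: computational core -/

def Bad : List (List ℕ) := [[0,0], [1,1], [2,2], [2,0], [2,1,2], [0,1,0,1], [0,2,1,0,2],
  [1,2,1,0,1,2], [0,1,0,2,1,0,1,0], [2,1,0,2,1,0,1,2,1,0,2]]

def occB (w u : List ℕ) (d : ℕ) : Bool :=
  (List.range w.length).all fun t => u.getD (d+t) 0 == w.getD t 0

def hasOccB (w v : List ℕ) (j : ℕ) : Bool :=
  decide (j + w.length ≤ v.length) && occB w v j

def avoidsB (v : List ℕ) : Bool :=
  Bad.all fun w => (List.range (v.length+1)).all fun j => ! hasOccB w v j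

def goodImage (v : List ℕ) : Bool :=
  Bad.all fun w => !occB w (hword v) 0 && !occB w (hword v) 1

def grow : ℕ → List ℕ → Bool
  | 0, v => !avoidsB v || goodImage v
  | k+1, v => !avoidsB v || (grow k (v ++ [0]) && grow k (v ++ [1]) && grow k (v ++ [2]))

set_option maxRecDepth 40000 in
lemma grow_true : grow 12 [] = true := by decide

def Wlist : ℕ → List ℕ
  | 0 => [0]
  | m+1 => hword (Wlist m)

lemma W7_len : (Wlist 7).length = 65 := by decide

set_option maxRecDepth 40000 in
lemma baseCheck : ∀ w ∈ Bad, ∀ i < 52,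
    ¬ ∀ t < w.length, (Wlist 7).getD (i+t) 0 = w.getD t 0 := by decide

/-! ### Bool/Prop bridges -/

lemma occB_iff {w u : List ℕ} {d : ℕ} :
    occB w u d = true ↔ ∀ t < w.length, u.getD (d+t) 0 = w.getD t 0 := by
  simp [occB]

lemma avoidsB_iff {v : List ℕ} :
    avoidsB v = true ↔ ∀ w ∈ Bad, ∀ j, j + w.length ≤ v.length →
      ¬ ∀ t < w.length, v.getD (j+t) 0 = w.getD t 0 := by
  constructor
  · intro hv w hw j hj hocc
    have hj' : j < v.length + 1 := by
      have hw1 : 1 ≤ w.length := by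
        rcases (by simpa [Bad] using hw : w = [0,0] ∨ w = [1,1] ∨ w = [2,2] ∨ w = [2,0] ∨
          w = [2,1,2] ∨ w = [0,1,0,1] ∨ w = [0,2,1,0,2] ∨ w = [1,2,1,0,1,2] ∨
          w = [0,1,0,2,1,0,1,0] ∨ w = [2,1,0,2,1,0,1,2,1,0,2]) with
          h|h|h|h|h|h|h|h|h|h <;> subst h <;> simp
      omega
    simp only [avoidsB, List.all_eq_true, List.mem_range] at hv
    have := hv w hw j hj'
    rw [Bool.not_eq_true', hasOccB, Bool.and_eq_false_iff] at this
    rcases this with h1 | h2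
    · simp at h1; omega
    · rw [← Bool.not_eq_true, occB_iff] at h2; exact h2 hocc
  · intro hv
    simp only [avoidsB, List.all_eq_true, List.mem_range]
    intro w hw j _
    rw [Bool.not_eq_true', hasOccB, Bool.and_eq_false_iff]
    by_cases hj : j + w.length ≤ v.length
    · right; rw [← Bool.not_eq_true, occB_iff]; exact fun hocc => hv w hw j hj hocc
    · left; simpa using hj

lemma avoidsB_prefix {v e : List ℕ} (hv : avoidsB (v ++ e) = true) : avoidsB v = true := by
  rw [avoidsB_iff] at *
  intro w hw j hj hocc
  refine hv w hw j (by simp; omega) ?_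
  intro t ht
  rw [List.getD_append _ _ _ _ (by omega)]
  exact hocc t ht

lemma grow_bridge : ∀ (k : ℕ) (v e : List ℕ), grow k v = true → e.length = k →
    (∀ a ∈ e, a < 3) → avoidsB (v ++ e) = true → goodImage (v ++ e) = true := by
  intro k
  induction k with
  | zero =>
    intro v e hg hlen _ hav
    rw [List.length_eq_zero_iff] at hlen
    subst hlen
    rw [grow, avoidsB_prefix (e := []) hav] at hg
    simpa using hg
  | succ k ih =>
    intro v e hg hlen h3 hav
    match e, hlen with
    | a :: e', hlen =>
      have hav' : avoidsB ((v ++ [a]) ++ e') = true := by simpa using hav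
      rw [grow, avoidsB_prefix (e := a :: e') hav] at hg
      simp only [Bool.not_true, Bool.false_or, Bool.and_eq_true] at hg
      have ha : a < 3 := h3 a (by simp)
      have h3' : ∀ b ∈ e', b < 3 := fun b hb => h3 b (by simp [hb])
      have hlen' : e'.length = k := by simpa using hlen
      have : goodImage ((v ++ [a]) ++ e') = true := by
        interval_cases a
        · exact ih (v ++ [0]) e' hg.1.1 hlen' h3' hav'
        · exact ih (v ++ [1]) e' hg.1.2 hlen' h3' hav'
        · exact ih (v ++ [2]) e' hg.2 hlen' h3' hav'
      simpa using this

lemma master {v : List ℕ} (h1 : v.length = 12) (h2 : ∀ a ∈ v, a < 3)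
    (h3 : avoidsB v = true) : goodImage v = true := by
  have := grow_bridge 12 [] v grow_true h1 h2 (by simpa using h3)
  simpa using this

/-! ### Sequence-side lemmas -/

def L (p : ℕ → ℕ) (n : ℕ) : ℕ := (hword ((List.range n).map p)).length

lemma range_map_getD (p : ℕ → ℕ) {n k : ℕ} (hk : k < n) :
    ((List.range n).map p).getD k 0 = p k := by
  rw [List.getD_eq_getElem _ _ (by simpa using hk)]
  simp

lemma hword_append (a b : List ℕ) : hword (a ++ b) = hword a ++ hword b := by
  simp [hword]

lemma h_len_pos (a : ℕ) : 1 ≤ (h a).length := by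
  rcases a with _ | _ | a <;> simp [h]

lemma h_len_le (a : ℕ) : (h a).length ≤ 2 := by
  rcases a with _ | _ | a <;> simp [h]

lemma L_succ (p : ℕ → ℕ) (n : ℕ) : L p (n+1) = L p n + (h (p n)).length := by
  simp [L, List.range_succ, hword]

lemma L_le (p : ℕ → ℕ) (n : ℕ) : L p n ≤ 2 * n := by
  induction n with
  | zero => simp [L, hword]
  | succ n ih => rw [L_succ]; have := h_len_le (p n); omega

lemma L_mono (p : ℕ → ℕ) : Monotone (L p) :=
  monotone_nat_of_le_succ fun n => by rw [L_succ]; omega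

lemma hword_prefix {p : ℕ → ℕ} (hp : IsFixedPoint p) (n : ℕ) :
    hword ((List.range n).map p) = (List.range (L p n)).map p := by
  apply List.ext_getElem (by simp [L])
  intro k h1 h2
  rw [← List.getD_eq_getElem _ 0 h1, ← List.getD_eq_getElem _ 0 h2]
  rw [hp.2.2 n k h1, range_map_getD p (by simpa using h2)]

lemma seg {p : ℕ → ℕ} (hp : IsFixedPoint p) (n m t : ℕ)
    (ht : t < (hword ((List.range m).map fun j => p (n+j))).length) :
    (hword ((List.range m).map fun j => p (n+j))).getD t 0 = p (L p n + t) := by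
  have hsplit : (List.range (n+m)).map p
      = (List.range n).map p ++ (List.range m).map fun j => p (n+j) := by
    rw [List.range_add, List.map_append, List.map_map]
    rfl
  have h1 : hword ((List.range (n+m)).map p)
      = hword ((List.range n).map p) ++ hword ((List.range m).map fun j => p (n+j)) := by
    rw [hsplit, hword_append]
  have hlt : L p n + t < (hword ((List.range (n+m)).map p)).length := by
    rw [h1, List.length_append]
    exact Nat.add_lt_add_left ht _
  have hgd := hp.2.2 (n+m) (L p n + t) hlt
  rw [h1] at hgd
  rw [show L p n = (hword ((List.range n).map p)).length from rfl] at hgd ⊢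
  rwa [List.getD_append_right _ _ _ _ (Nat.le_add_right _ t), Nat.add_sub_cancel_left] at hgd

lemma prefW {p : ℕ → ℕ} (hp : IsFixedPoint p) :
    ∀ m, (List.range (Wlist m).length).map p = Wlist m := by
  intro m
  induction m with
  | zero =>
    show (List.range 1).map p = [0]
    simp [List.range_succ, hp.2.1]
  | succ m ih =>
    have he : Wlist (m+1) = (List.range (L p (Wlist m).length)).map p := by
      rw [Wlist]
      conv_lhs => rw [← ih]
      exact hword_prefix hp _
    rw [he]
    simp

lemma p_eq_W7 {p : ℕ → ℕ} (hp : IsFixedPoint p) {k : ℕ} (hk : k < 65) :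
    p k = (Wlist 7).getD k 0 := by
  have h7 := prefW hp 7
  rw [W7_len] at h7
  rw [← h7, range_map_getD p hk]

/-! ### The main induction -/

def QQ (p : ℕ → ℕ) (i : ℕ) : Prop :=
  ∀ w ∈ Bad, w ≠ (List.range w.length).map fun j => p (i + j)

lemma factor_getD {w : List ℕ} {f : ℕ → ℕ}
    (he : w = (List.range w.length).map f) {t : ℕ} (ht : t < w.length) :
    w.getD t 0 = f t := by
  conv_lhs => rw [he]
  rw [List.getD_eq_getElem _ _ (by simpa using ht)]
  simp

lemma factor_build {w : List ℕ} {f : ℕ → ℕ}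
    (hocc : ∀ t < w.length, w.getD t 0 = f t) :
    w = (List.range w.length).map f := by
  apply List.ext_getElem (by simp)
  intro k h1 h2
  rw [← List.getD_eq_getElem _ 0 h1, hocc k h1]
  simp

lemma bad_len {w : List ℕ} (hw : w ∈ Bad) : 2 ≤ w.length ∧ w.length ≤ 11 := by
  rcases (by simpa [Bad] using hw : w = [0,0] ∨ w = [1,1] ∨ w = [2,2] ∨ w = [2,0] ∨
    w = [2,1,2] ∨ w = [0,1,0,1] ∨ w = [0,2,1,0,2] ∨ w = [1,2,1,0,1,2] ∨
    w = [0,1,0,2,1,0,1,0] ∨ w = [2,1,0,2,1,0,1,2,1,0,2]) with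
    hh|hh|hh|hh|hh|hh|hh|hh|hh|hh <;> subst hh <;> simp

lemma no22 {p : ℕ → ℕ} (hp : IsFixedPoint p) {k : ℕ} (hQ : QQ p k) (h2 : p k = 2) :
    p (k+1) = 1 := by
  have e : (List.range 2).map (fun j => p (k + j)) = [p k, p (k+1)] := by
    simp [List.range_succ]
  have ha := hQ [2,2] (by simp [Bad])
  have hb := hQ [2,0] (by simp [Bad])
  rw [show ([2,2] : List ℕ).length = 2 from rfl, e] at ha
  rw [show ([2,0] : List ℕ).length = 2 from rfl, e] at hb
  simp only [ne_eq, List.cons.injEq, and_true, not_and] at ha hb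
  have h3 := hp.1 (k+1)
  omega

lemma L_lower {p : ℕ → ℕ} (hp : IsFixedPoint p) {n : ℕ}
    (hQ : ∀ k, k + 1 < n → QQ p k) : ∀ t, 2*t ≤ n → 3*t ≤ L p (2*t) := by
  intro t
  induction t with
  | zero => simp
  | succ t ih =>
    intro h2t
    have h1 := ih (by omega)
    have e : 2*(t+1) = (2*t + 1) + 1 := by ring
    rw [e, L_succ, L_succ]
    have hpos := h_len_pos (p (2*t+1))
    by_cases hc : p (2*t) = 2
    · have h21 := no22 hp (hQ (2*t) (by omega)) hc
      rw [hc, h21]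
      have e1 : (h 2).length = 1 := rfl
      have e2 : (h 1).length = 2 := rfl
      omega
    · have h3 := hp.1 (2*t)
      have hd : p (2*t) = 0 ∨ p (2*t) = 1 := by omega
      have e0 : (h 0).length = 2 := rfl
      have e1 : (h 1).length = 2 := rfl
      rcases hd with hd | hd <;> rw [hd] <;> omega

lemma main {p : ℕ → ℕ} (hp : IsFixedPoint p) : ∀ i, QQ p i := by
  intro i
  induction i using Nat.strong_induction_on with
  | _ i IH =>
  intro w hw heq
  have hlenw := bad_len hw
  have hocc : ∀ t < w.length, w.getD t 0 = p (i + t) := fun t ht => factor_getD heq ht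
  by_cases hbig : i < 52
  · -- base case: use the computed prefix
    refine baseCheck w hw i hbig ?_
    intro t ht
    rw [← p_eq_W7 hp (by omega), ← hocc t ht]
  · push_neg at hbig
    set n := Nat.findGreatest (fun m => L p m ≤ i) i with hn
    have hn_le_i : n ≤ i := by rw [hn]; exact Nat.findGreatest_le i
    have hLn_le : L p n ≤ i := by
      rw [hn]
      exact Nat.findGreatest_spec (P := fun m => L p m ≤ i) (Nat.zero_le i)
        (by show L p 0 ≤ i; simp [L, hword])
    have h26 : 26 ≤ n := by
      rw [hn]
      exact Nat.le_findGreatest (by omega) (by have := L_le p 26; omega)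
    have hQbelow : ∀ k, k + 1 < n → QQ p k := fun k hk => IH k (by omega)
    have hL12 : n + 12 ≤ L p n := by
      have hlow : 3 * (n/2) ≤ L p (2*(n/2)) := L_lower hp hQbelow (n / 2) (by omega)
      have hmono : L p (2*(n/2)) ≤ L p n := L_mono p (by omega)
      omega
    have hi_lt : i < L p (n+1) := by
      rcases Nat.lt_or_ge n i with hni | hni
      · have hng : ¬ ((fun m => L p m ≤ i) (n+1)) :=
          Nat.findGreatest_is_greatest (P := fun m => L p m ≤ i) (k := n+1) (n := i)
            (by rw [← hn]; omega) (by omega)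
        simp only [] at hng
        omega
      · omega
    have hd2 : i - L p n < (h (p n)).length := by
      have := L_succ p n; omega
    have hd1 : i - L p n ≤ 1 := by have := h_len_le (p n); omega
    set d := i - L p n with hdd
    set v := (List.range 12).map (fun j => p (n + j)) with hv
    have hvlen : v.length = 12 := by rw [hv]; simp
    have hv3 : ∀ a ∈ v, a < 3 := by
      intro a ha
      rw [hv] at ha
      simp only [List.mem_map, List.mem_range] at ha
      obtain ⟨j, _, rfl⟩ := ha
      exact hp.1 _
    have hvgetD : ∀ k < 12, v.getD k 0 = p (n + k) := by
      intro k hk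
      rw [hv, List.getD_eq_getElem _ _ (by simpa using hk)]
      simp
    have hvav : avoidsB v = true := by
      rw [avoidsB_iff]
      intro u hu j hj hoccu
      have hulen := bad_len hu
      rw [hvlen] at hj
      have hfac : u = (List.range u.length).map fun t => p ((n + j) + t) := by
        apply factor_build
        intro t ht
        rw [← hoccu t ht, hvgetD (j + t) (by omega)]
        ring_nf
      exact IH (n + j) (by omega) u hu hfac
    have hgi : goodImage v = true := master hvlen hv3 hvav
    have hhlen : 12 ≤ (hword v).length := by
      have hgen : ∀ l : List ℕ, l.length ≤ (hword l).length := by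
        intro l
        induction l with
        | nil => simp [hword]
        | cons a l ih =>
          have hc : hword (a :: l) = h a ++ hword l := rfl
          rw [hc, List.length_append, List.length_cons]
          have := h_len_pos a
          omega
      have := hgen v; omega
    have hoccw : occB w (hword v) d = true := by
      rw [occB_iff]
      intro t ht
      have hdt : d + t < (hword v).length := by omega
      rw [hv]
      rw [seg hp n 12 (d + t) (by rw [← hv]; exact hdt)]
      rw [show L p n + (d + t) = i + t from by omega]
      exact (hocc t ht).symm
    simp only [goodImage, List.all_eq_true, Bool.and_eq_true, Bool.not_eq_true'] at hgi
    have hgw := hgi w hw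
    interval_cases d
    · rw [hgw.1] at hoccw; exact Bool.false_ne_true hoccw
    · rw [hgw.2] at hoccw; exact Bool.false_ne_true hoccw

theorem stmt19 (p : ℕ → ℕ) (hp : IsFixedPoint p) :
    ∀ f ∈ [[0,0], [1,1], [2,2], [2,0], [2,1,2], [0,1,0,1], [0,2,1,0,2],
      [1,2,1,0,1,2], [0,1,0,2,1,0,1,0], [2,1,0,2,1,0,1,2,1,0,2]],
      ¬ IsFactor f p := by
  intro f hf ⟨i, hi⟩
  exact main hp i f hf hi
end
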